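/- arXiv:math/0605131 — 9 statements merged into one kernel-verified Lean document; each statement's English description precedes it below -/
import Mathlib

section
/- Let (X,d) be an ultrametric space, x ∈ X, ε > 0, and let g : B(x,ε) → B(x,ε) be an isometry of the open ball onto itself such that g x = x and g is non-trivial arbitrarily close to x (i.e., for every δ with 0 < δ ≤ ε there exists y ∈ B(x,δ) with g y ≠ y). Then there exists an isometry g̃ : B(x,ε) → B(x,ε) onto itself such that g̃ x = x, g̃ is non-trivial arbitrarily close to x, and for every δ with 0 < δ ≤ ε there exist y ∈ B(x,δ) and μ > 0 with B(y,μ) ⊆ B(x,ε) such that g̃ z = z for all z ∈ B(y,μ). -/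
/-- **Modification of Local Isometry.** If `g` is an isometry of the open ball `B(x,ε)`
onto itself in an ultrametric space fixing `x` and non-trivial arbitrarily close to `x`,
then there is an isometry `g̃` of `B(x,ε)` onto itself fixing `x`, non-trivial arbitrarily
close to `x`, such that arbitrarily close to `x` there are small balls on which `g̃`
is the identity. -/
theorem modification_of_local_isometry {X : Type*} [MetricSpace X]
    (ultra : ∀ x y z : X, dist x y ≤ max (dist x z) (dist z y))
    (x : X) (ε : ℝ) (hε : 0 < ε) (g : X → X)
    (hbij : Set.BijOn g (Metric.ball x ε) (Metric.ball x ε))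
    (hiso : ∀ a ∈ Metric.ball x ε, ∀ b ∈ Metric.ball x ε, dist (g a) (g b) = dist a b)
    (hgx : g x = x)
    (hnontriv : ∀ δ : ℝ, 0 < δ → δ ≤ ε → ∃ y ∈ Metric.ball x δ, g y ≠ y) :
    ∃ g' : X → X,
      Set.BijOn g' (Metric.ball x ε) (Metric.ball x ε) ∧
      (∀ a ∈ Metric.ball x ε, ∀ b ∈ Metric.ball x ε, dist (g' a) (g' b) = dist a b) ∧
      g' x = x ∧
      (∀ δ : ℝ, 0 < δ → δ ≤ ε → ∃ y ∈ Metric.ball x δ, g' y ≠ y) ∧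
      (∀ δ : ℝ, 0 < δ → δ ≤ ε → ∃ y ∈ Metric.ball x δ, ∃ μ > 0,
        Metric.ball y μ ⊆ Metric.ball x ε ∧ ∀ z ∈ Metric.ball y μ, g' z = z) := by
  classical
  have hx : x ∈ Metric.ball x ε := by simpa using hε
  -- ultrametric lemma: two points at different distances from x
  have L1 : ∀ a b : X, dist a x ≠ dist b x → dist a b = max (dist a x) (dist b x) := by
    intro a b hne
    rcases lt_or_gt_of_ne hne with h | h
    · have h1 : dist a b ≤ dist b x := by
        have h2 := ultra a b x
        rw [dist_comm x b] at h2
        exact h2.trans (max_le h.le le_rfl)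
      have h3 : dist b x ≤ dist a b := by
        have h4 := ultra b x a
        rcases le_max_iff.mp h4 with h5 | h5
        · rwa [dist_comm b a] at h5
        · exact absurd h5 (not_le.mpr h)
      rw [le_antisymm h1 h3, max_eq_right h.le]
    · have h1 : dist a b ≤ dist a x := by
        have h2 := ultra a b x
        rw [dist_comm x b] at h2
        exact h2.trans (max_le le_rfl h.le)
      have h3 : dist a x ≤ dist a b := by
        have h4 := ultra a x b
        rcases le_max_iff.mp h4 with h5 | h5
        · exact h5
        · exact absurd h5 (not_le.mpr h)
      rw [le_antisymm h1 h3, max_eq_left h.le]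
  -- g preserves distance to x
  have L2 : ∀ a ∈ Metric.ball x ε, dist (g a) x = dist a x := by
    intro a ha
    have := hiso a ha x hx
    rwa [hgx] at this
  -- choice of nontrivial points
  have hw : ∀ δ : ℝ, 0 < δ ∧ δ ≤ ε → ∃ y, y ∈ Metric.ball x δ ∧ g y ≠ y := by
    intro δ h
    obtain ⟨y, hy1, hy2⟩ := hnontriv δ h.1 h.2
    exact ⟨y, hy1, hy2⟩
  let w : ℝ → X := fun δ => if h : 0 < δ ∧ δ ≤ ε then (hw δ h).choose else x
  have hwspec : ∀ δ : ℝ, (h : 0 < δ ∧ δ ≤ ε) → w δ ∈ Metric.ball x δ ∧ g (w δ) ≠ w δ := by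
    intro δ h
    simp only [w, dif_pos h]
    exact (hw δ h).choose_spec
  -- recursive sequence of radii
  let r : ℕ → ℝ := fun n => Nat.rec ε (fun n rn => dist (w (min rn (ε / 2 ^ n))) x) n
  have hr0 : r 0 = ε := rfl
  have hrs : ∀ n, r (n + 1) = dist (w (min (r n) (ε / 2 ^ n))) x := fun n => rfl
  have hrbasic : ∀ n, 0 < r n ∧ r n ≤ ε := by
    intro n
    induction n with
    | zero => exact ⟨hε, le_refl ε⟩
    | succ n ih =>
      have h2pow : (0:ℝ) < ε / 2 ^ n := by positivity
      have hle : ε / 2 ^ n ≤ ε := by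
        apply div_le_self hε.le
        exact one_le_pow₀ (by norm_num)
      have hδ : 0 < min (r n) (ε / 2 ^ n) ∧ min (r n) (ε / 2 ^ n) ≤ ε :=
        ⟨lt_min ih.1 h2pow, (min_le_right _ _).trans hle⟩
      obtain ⟨hmem, hne⟩ := hwspec _ hδ
      have hne' : w (min (r n) (ε / 2 ^ n)) ≠ x := by
        intro hEq
        rw [hEq, hgx] at hne
        exact hne rfl
      constructor
      · rw [hrs]
        exact dist_pos.mpr hne'
      · rw [hrs]
        exact le_of_lt (lt_of_lt_of_le (Metric.mem_ball.mp hmem) hδ.2)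
  have hδok : ∀ n, 0 < min (r n) (ε / 2 ^ n) ∧ min (r n) (ε / 2 ^ n) ≤ ε := by
    intro n
    have h2pow : (0:ℝ) < ε / 2 ^ n := by positivity
    have hle : ε / 2 ^ n ≤ ε := by
      apply div_le_self hε.le
      exact one_le_pow₀ (by norm_num)
    exact ⟨lt_min (hrbasic n).1 h2pow, (min_le_right _ _).trans hle⟩
  have hrlt : ∀ n, r (n + 1) < min (r n) (ε / 2 ^ n) := by
    intro n
    rw [hrs]
    exact Metric.mem_ball.mp (hwspec _ (hδok n)).1
  have hranti : StrictAnti r := by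
    apply strictAnti_nat_of_succ_lt
    intro n
    exact (hrlt n).trans_le (min_le_left _ _)
  -- witnesses
  let y : ℕ → X := fun n => w (min (r n) (ε / 2 ^ n))
  have hy1 : ∀ n, dist (y n) x = r (n + 1) := fun n => (hrs n).symm
  have hy2 : ∀ n, g (y n) ≠ y n := fun n => (hwspec _ (hδok n)).2
  have hymem : ∀ n, y n ∈ Metric.ball x ε := by
    intro n
    rw [Metric.mem_ball, hy1]
    exact (hrlt n).trans_le ((min_le_left _ _).trans (hrbasic n).2)
  -- smallness: r (n+1) < ε / 2 ^ n
  have hrsmall : ∀ n, r (n + 1) < ε / 2 ^ n := fun n => (hrlt n).trans_le (min_le_right _ _)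
  -- the set of radii where we apply g
  let S : ℝ → Prop := fun s => ∃ n, s = r (2 * n + 1)
  let g' : X → X := fun z => if S (dist z x) then g z else z
  have hSball : ∀ z : X, S (dist z x) → z ∈ Metric.ball x ε := by
    rintro z ⟨n, hn⟩
    rw [Metric.mem_ball, hn]
    calc r (2 * n + 1) < r 0 := hranti (Nat.succ_pos _)
    _ = ε := hr0
  -- g' preserves distance to x
  have L3 : ∀ a : X, dist (g' a) x = dist a x := by
    intro a
    by_cases h : S (dist a x)
    · simp only [g', if_pos h]
      exact L2 a (hSball a h)
    · simp only [g', if_neg h]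
  -- g' is an isometry on the ball
  have hiso' : ∀ a ∈ Metric.ball x ε, ∀ b ∈ Metric.ball x ε,
      dist (g' a) (g' b) = dist a b := by
    intro a ha b hb
    by_cases hab : dist a x = dist b x
    · by_cases h : S (dist a x)
      · have h' : S (dist b x) := hab ▸ h
        simp only [g', if_pos h, if_pos h']
        exact hiso a ha b hb
      · have h' : ¬ S (dist b x) := hab ▸ h
        simp only [g', if_neg h, if_neg h']
    · have h1 : dist (g' a) x ≠ dist (g' b) x := by rw [L3, L3]; exact hab
      rw [L1 _ _ h1, L3, L3, L1 _ _ hab]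
  -- fixed point at x
  have hSpos : ∀ s : ℝ, S s → 0 < s := by
    rintro s ⟨n, rfl⟩
    exact (hrbasic (2 * n + 1)).1
  have hg'x : g' x = x := by
    have : ¬ S (dist x x) := by
      intro h
      have := hSpos _ h
      simp at this
    simp only [g', if_neg this]
  -- membership
  have hmaps : ∀ a ∈ Metric.ball x ε, g' a ∈ Metric.ball x ε := by
    intro a ha
    rw [Metric.mem_ball, L3]
    exact ha
  -- surjectivity
  have hsurj : Set.SurjOn g' (Metric.ball x ε) (Metric.ball x ε) := by
    intro b hb
    by_cases h : S (dist b x)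
    · obtain ⟨a, ha, hab⟩ := hbij.2.2 hb
      have hax : dist a x = dist b x := by rw [← hab]; exact (L2 a ha).symm
      refine ⟨a, ha, ?_⟩
      simp only [g', if_pos (hax ▸ h : S (dist a x))]
      exact hab
    · exact ⟨b, hb, by simp only [g', if_neg h]⟩
  -- injectivity from isometry
  have hinj : Set.InjOn g' (Metric.ball x ε) := by
    intro a ha b hb hEq
    have := hiso' a ha b hb
    rw [hEq, dist_self] at this
    exact dist_eq_zero.mp this.symm
  -- find small radii
  have hsmall : ∀ δ : ℝ, 0 < δ → ∀ m : ℕ, ∃ n ≥ m, r (n + 1) < δ := by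
    intro δ hδ m
    obtain ⟨k, hk⟩ := pow_unbounded_of_one_lt (ε / δ) (by norm_num : (1:ℝ) < 2)
    refine ⟨max m k, le_max_left _ _, ?_⟩
    have h1 : ε / 2 ^ (max m k) ≤ ε / 2 ^ k := by
      apply div_le_div_of_nonneg_left hε.le (by positivity)
      exact pow_le_pow_right₀ (by norm_num) (le_max_right _ _)
    have h2 : ε / 2 ^ k < δ := by
      rw [div_lt_iff₀ (by positivity)]
      calc ε = (ε / δ) * δ := by field_simp
      _ < 2 ^ k * δ := by exact mul_lt_mul_of_pos_right hk hδ
      _ = δ * 2 ^ k := mul_comm _ _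
    exact lt_trans (hrsmall (max m k)) (lt_of_le_of_lt h1 h2)
  refine ⟨g', ⟨hmaps, hinj, hsurj⟩, hiso', hg'x, ?_, ?_⟩
  · -- nontrivial arbitrarily close
    intro δ hδ hδε
    obtain ⟨n, -, hn⟩ := hsmall δ hδ 0
    -- use an odd index below: pick m with 2*m+1 ≥ n+1 and r (2*m+1) < δ
    obtain ⟨m, -, hm⟩ := hsmall δ hδ 0
    -- r (2*m+1) for suitable m : take index 2*n
    have hn2 : r (2 * n + 1) < δ := by
      exact lt_of_le_of_lt (hranti.antitone (by omega : n + 1 ≤ 2 * n + 1)) hn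
    refine ⟨y (2 * n), ?_, ?_⟩
    · rw [Metric.mem_ball, hy1]; exact hn2
    · have hS : S (dist (y (2 * n)) x) := ⟨n, by rw [hy1]⟩
      simp only [g', if_pos hS]
      exact hy2 (2 * n)
  · -- identity balls arbitrarily close
    intro δ hδ hδε
    obtain ⟨n, -, hn⟩ := hsmall δ hδ 0
    have hn2 : r (2 * n + 2) < δ := by
      exact lt_of_le_of_lt (hranti.antitone (by omega : n + 1 ≤ 2 * n + 2)) hn
    set μ := r (2 * n + 2) with hμdef
    have hμpos : 0 < μ := (hrbasic (2 * n + 2)).1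
    have hyd : dist (y (2 * n + 1)) x = μ := hy1 (2 * n + 1)
    refine ⟨y (2 * n + 1), ?_, μ, hμpos, ?_, ?_⟩
    · rw [Metric.mem_ball, hyd]; exact hn2
    · intro z hz
      rw [Metric.mem_ball] at hz ⊢
      calc dist z x ≤ max (dist z (y (2 * n + 1))) (dist (y (2 * n + 1)) x) :=
            ultra z x (y (2 * n + 1))
      _ ≤ μ := max_le hz.le hyd.le
      _ < ε := lt_of_lt_of_le hn2 hδε
    · intro z hz
      rw [Metric.mem_ball] at hz
      -- dist z x = μ
      have hle : dist z x ≤ μ :=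
        le_trans (ultra z x (y (2 * n + 1))) (max_le hz.le hyd.le)
      have hge : μ ≤ dist z x := by
        by_contra hlt
        push_neg at hlt
        have := ultra (y (2 * n + 1)) x z
        rw [hyd] at this
        have : μ ≤ max (dist (y (2 * n + 1)) z) (dist z x) := this
        rcases le_max_iff.mp this with h | h
        · rw [dist_comm] at h; exact absurd h (not_le.mpr hz)
        · exact absurd h (not_le.mpr hlt)
      have hzx : dist z x = μ := le_antisymm hle hge
      have hnS : ¬ S (dist z x) := by
        rintro ⟨m, hm⟩
        rw [hzx, hμdef] at hm
        have hne2 : (2 * n + 2 : ℕ) ≠ 2 * m + 1 := by omega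
        rcases hne2.lt_or_gt with h | h
        · exact absurd hm (ne_of_gt (hranti h))
        · exact absurd hm (ne_of_lt (hranti h))
      simp only [g', if_neg hnS]
end

section
/- Let (X,d) be an ultrametric space, let x, y ∈ X and ε > 0, and let g : B(x,ε) → B(y,ε) be an isometry of the open ball B(x,ε) onto the open ball B(y,ε) with g x = y. Then there exists a local isometry g̃ : X → X such that g̃ a = g a for all a ∈ B(x,ε). (Local Isometry Extension: every isometry germ between points of an ultrametric space is the germ of a globally defined local isometry.) -/
/-- A local isometry of a metric space `X`: a bijection `h : X → X` such that every
point has an open ball around it on which `h` restricts to an isometry onto the ball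
of the same radius around the image point. -/
def IsLocalIsometry {X : Type*} [MetricSpace X] (h : X → X) : Prop :=
  Function.Bijective h ∧ ∀ x : X, ∃ ε > 0,
    Set.BijOn h (Metric.ball x ε) (Metric.ball (h x) ε) ∧
    ∀ a ∈ Metric.ball x ε, ∀ b ∈ Metric.ball x ε, dist (h a) (h b) = dist a b

/-- In an ultrametric space, any point of an open ball is a center of it. -/
lemma ultra_ball_eq {X : Type*} [MetricSpace X]
    (ultra : ∀ x y z : X, dist x y ≤ max (dist x z) (dist z y))
    {a b : X} {ε : ℝ} (hb : b ∈ Metric.ball a ε) :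
    Metric.ball b ε = Metric.ball a ε := by
  rw [Metric.mem_ball] at hb
  ext c
  simp only [Metric.mem_ball]
  constructor
  · intro h
    calc dist c a ≤ max (dist c b) (dist b a) := ultra c a b
    _ < ε := max_lt h hb
  · intro h
    calc dist c b ≤ max (dist c a) (dist a b) := ultra c b a
    _ < ε := max_lt h (by rwa [dist_comm] at hb)

/-- Two intersecting open balls of the same radius coincide. -/
lemma ultra_ball_eq_of_mem {X : Type*} [MetricSpace X]
    (ultra : ∀ x y z : X, dist x y ≤ max (dist x z) (dist z y))
    {a b c : X} {ε : ℝ} (ha : c ∈ Metric.ball a ε) (hb : c ∈ Metric.ball b ε) :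
    Metric.ball a ε = Metric.ball b ε := by
  rw [← ultra_ball_eq ultra ha, ← ultra_ball_eq ultra hb]

/-- **Local Isometry Extension.** Every isometry of an open ball `B(x,ε)` onto an open
ball `B(y,ε)` in an ultrametric space, taking `x` to `y`, extends (up to germ) to a
globally defined local isometry of `X`. -/
theorem local_isometry_extension {X : Type*} [MetricSpace X]
    (ultra : ∀ x y z : X, dist x y ≤ max (dist x z) (dist z y))
    (x y : X) (ε : ℝ) (hε : 0 < ε) (g : X → X)
    (hbij : Set.BijOn g (Metric.ball x ε) (Metric.ball y ε))
    (hiso : ∀ a ∈ Metric.ball x ε, ∀ b ∈ Metric.ball x ε, dist (g a) (g b) = dist a b)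
    (hgx : g x = y) :
    ∃ g' : X → X, IsLocalIsometry g' ∧ ∀ a ∈ Metric.ball x ε, g' a = g a := by
  haveI : Nonempty X := ⟨x⟩
  classical
  set B1 := Metric.ball x ε with hB1
  set B2 := Metric.ball y ε with hB2
  set f : X → X := Function.invFunOn g B1 with hf
  have hinv : Set.InvOn f g B1 B2 := hbij.invOn_invFunOn
  have hfbij : Set.BijOn f B2 B1 := Set.BijOn.symm hinv.symm hbij
  set g' : X → X := fun a => if a ∈ B1 then g a else if a ∈ B2 then f a else a with hg'
  set inv : X → X := fun a => if a ∈ B2 then f a else if a ∈ B1 then g a else a with hinvdef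
  -- key facts
  have hg'B1 : ∀ a ∈ B1, g' a = g a := fun a ha => by simp [hg', ha]
  have hli : Function.LeftInverse inv g' := by
    intro a
    by_cases ha1 : a ∈ B1
    · have hga : g a ∈ B2 := hbij.mapsTo ha1
      simp only [hg', hinvdef, if_pos ha1, if_pos hga]
      exact hinv.1 ha1
    · by_cases ha2 : a ∈ B2
      · have hfa : f a ∈ B1 := hfbij.mapsTo ha2
        have hfa2 : f a ∉ B2 := by
          intro h
          have hEq : B1 = B2 := ultra_ball_eq_of_mem ultra hfa h
          exact ha1 (hEq.symm ▸ ha2)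
        simp only [hg', hinvdef, if_neg ha1, if_pos ha2, if_neg hfa2, if_pos hfa]
        exact hinv.2 ha2
      · simp [hg', hinvdef, ha1, ha2]
  have hri : Function.RightInverse inv g' := by
    intro a
    by_cases ha2 : a ∈ B2
    · have hfa : f a ∈ B1 := hfbij.mapsTo ha2
      simp only [hg', hinvdef, if_pos ha2, if_pos hfa]
      exact hinv.2 ha2
    · by_cases ha1 : a ∈ B1
      · have hga : g a ∈ B2 := hbij.mapsTo ha1
        have hga1 : g a ∉ B1 := by
          intro h
          have hEq : B1 = B2 := ultra_ball_eq_of_mem ultra h hga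
          exact ha2 (hEq ▸ ha1)
        simp only [hg', hinvdef, if_neg ha2, if_pos ha1, if_neg hga1, if_pos hga]
        exact hinv.1 ha1
      · simp [hg', hinvdef, ha1, ha2]
  refine ⟨g', ⟨⟨hli.injective, hri.surjective⟩, ?_⟩, hg'B1⟩
  intro z
  by_cases hz1 : z ∈ B1
  · refine ⟨ε, hε, ?_, ?_⟩
    · have hbz : Metric.ball z ε = B1 := ultra_ball_eq ultra hz1
      have hgz : g' z = g z := hg'B1 z hz1
      have hgz2 : g z ∈ B2 := hbij.mapsTo hz1
      have hbgz : Metric.ball (g' z) ε = B2 := by rw [hgz]; exact ultra_ball_eq ultra hgz2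
      rw [hbz, hbgz]
      exact (hbij.congr fun a ha => (hg'B1 a ha).symm)
    · intro a ha b hb
      rw [ultra_ball_eq ultra hz1] at ha hb
      rw [hg'B1 a ha, hg'B1 b hb]
      exact hiso a ha b hb
  · by_cases hz2 : z ∈ B2
    · have hbz : Metric.ball z ε = B2 := ultra_ball_eq ultra hz2
      have hdisj : ∀ a ∈ B2, a ∉ B1 := by
        intro a ha h
        have hEq : B1 = B2 := ultra_ball_eq_of_mem ultra h ha
        exact hz1 (hEq.symm ▸ hz2)
      have hg'B2 : ∀ a ∈ B2, g' a = f a := by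
        intro a ha
        simp [hg', hdisj a ha, ha]
      have hfz : f z ∈ B1 := hfbij.mapsTo hz2
      have hbfz : Metric.ball (g' z) ε = B1 := by
        rw [hg'B2 z hz2]; exact ultra_ball_eq ultra hfz
      refine ⟨ε, hε, ?_, ?_⟩
      · rw [hbz, hbfz]
        exact (hfbij.congr fun a ha => (hg'B2 a ha).symm)
      · intro a ha b hb
        rw [hbz] at ha hb
        rw [hg'B2 a ha, hg'B2 b hb]
        have := hiso (f a) (hfbij.mapsTo ha) (f b) (hfbij.mapsTo hb)
        rw [hinv.2 ha, hinv.2 hb] at this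
        rw [← this]
    · refine ⟨ε, hε, ?_⟩
      have hdisj : ∀ a ∈ Metric.ball z ε, a ∉ B1 ∧ a ∉ B2 := by
        intro a ha
        constructor
        · intro h
          have hEq : Metric.ball z ε = B1 := ultra_ball_eq_of_mem ultra ha h
          exact hz1 (hEq ▸ Metric.mem_ball_self hε)
        · intro h
          have hEq : Metric.ball z ε = B2 := ultra_ball_eq_of_mem ultra ha h
          exact hz2 (hEq ▸ Metric.mem_ball_self hε)
      have hid : ∀ a ∈ Metric.ball z ε, g' a = a := by
        intro a ha
        obtain ⟨h1, h2⟩ := hdisj a ha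
        simp [hg', h1, h2]
      have hgz : g' z = z := hid z (Metric.mem_ball_self hε)
      rw [hgz]
      refine ⟨(Set.bijOn_id _).congr fun a ha => (hid a ha).symm, ?_⟩
      intro a ha b hb
      rw [hid a ha, hid b hb]
end

section
/- An ultrametric space X is locally rigid if and only if for every x ∈ X there exists ε_x > 0 such that for every ε with 0 < ε ≤ ε_x, every isometry of the open ball B(x,ε) onto itself is the identity. -/
/-- A metric space is locally rigid if every point has an open ball around it
such that every isometry of that ball onto itself is the identity. -/
def LocallyRigid (X : Type*) [MetricSpace X] : Prop :=
  ∀ x : X, ∃ ε > 0, ∀ h : X → X,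
    Set.BijOn h (Metric.ball x ε) (Metric.ball x ε) →
    (∀ a ∈ Metric.ball x ε, ∀ b ∈ Metric.ball x ε, dist (h a) (h b) = dist a b) →
    ∀ a ∈ Metric.ball x ε, h a = a

/-- An ultrametric space `X` is locally rigid if and only if for every `x ∈ X` there
exists `ε_x > 0` such that for every `0 < ε ≤ ε_x`, every isometry of `B(x,ε)` onto
itself is the identity. -/
theorem locallyRigid_iff_forall_smaller {X : Type*} [MetricSpace X]
    (ultra : ∀ x y z : X, dist x y ≤ max (dist x z) (dist z y)) :
    LocallyRigid X ↔
      ∀ x : X, ∃ εx > 0, ∀ ε : ℝ, 0 < ε → ε ≤ εx →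
        ∀ h : X → X,
          Set.BijOn h (Metric.ball x ε) (Metric.ball x ε) →
          (∀ a ∈ Metric.ball x ε, ∀ b ∈ Metric.ball x ε, dist (h a) (h b) = dist a b) →
          ∀ a ∈ Metric.ball x ε, h a = a := by
  classical
  constructor
  · intro H x
    obtain ⟨εx, hεx, hrig⟩ := H x
    refine ⟨εx, hεx, ?_⟩
    intro ε hε hεεx h hbij hiso
    -- isosceles lemma
    have isoc : ∀ a b : X, a ∈ Metric.ball x ε → b ∉ Metric.ball x ε →
        dist a b = dist b x := by
      intro a b ha hb
      rw [Metric.mem_ball] at ha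
      rw [Metric.mem_ball, not_lt] at hb
      have hax : dist a x < dist b x := lt_of_lt_of_le ha hb
      have h1 : dist a b ≤ dist b x := by
        have := ultra a b x
        rw [dist_comm x b] at this
        exact this.trans (max_le (le_of_lt hax) le_rfl)
      have h2 : dist b x ≤ dist a b := by
        have := ultra b x a
        rcases max_cases (dist b a) (dist a x) with ⟨he, _⟩ | ⟨he, _⟩
        · rw [he, dist_comm b a] at this; exact this
        · rw [he] at this; exact absurd (lt_of_le_of_lt this hax) (lt_irrefl _)
      exact le_antisymm h1 h2
    set g : X → X := fun a => if a ∈ Metric.ball x ε then h a else a with hg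
    have hsub : Metric.ball x ε ⊆ Metric.ball x εx := Metric.ball_subset_ball hεεx
    have hgin : ∀ a ∈ Metric.ball x ε, g a = h a := fun a ha => if_pos ha
    have hgout : ∀ a, a ∉ Metric.ball x ε → g a = a := fun a ha => if_neg ha
    have gbij : Set.BijOn g (Metric.ball x εx) (Metric.ball x εx) := by
      refine ⟨?_, ?_, ?_⟩
      · intro a ha
        by_cases h1 : a ∈ Metric.ball x ε
        · rw [hgin a h1]; exact hsub (hbij.mapsTo h1)
        · rw [hgout a h1]; exact ha
      · intro a ha b hb hab
        by_cases h1 : a ∈ Metric.ball x ε <;> by_cases h2 : b ∈ Metric.ball x ε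
        · exact hbij.injOn h1 h2 (by rwa [hgin a h1, hgin b h2] at hab)
        · exfalso; apply h2
          rw [hgout b h2, hgin a h1] at hab; rw [← hab]; exact hbij.mapsTo h1
        · exfalso; apply h1
          rw [hgout a h1, hgin b h2] at hab; rw [hab]; exact hbij.mapsTo h2
        · rwa [hgout a h1, hgout b h2] at hab
      · intro b hb
        by_cases h1 : b ∈ Metric.ball x ε
        · obtain ⟨a, ha, hab⟩ := hbij.surjOn h1
          exact ⟨a, hsub ha, by rw [hgin a ha, hab]⟩
        · exact ⟨b, hb, hgout b h1⟩
    have giso : ∀ a ∈ Metric.ball x εx, ∀ b ∈ Metric.ball x εx,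
        dist (g a) (g b) = dist a b := by
      intro a _ b _
      by_cases h1 : a ∈ Metric.ball x ε <;> by_cases h2 : b ∈ Metric.ball x ε
      · rw [hgin a h1, hgin b h2]; exact hiso a h1 b h2
      · rw [hgin a h1, hgout b h2, isoc (h a) b (hbij.mapsTo h1) h2, isoc a b h1 h2]
      · rw [hgout a h1, hgin b h2, dist_comm a (h b), dist_comm a b,
          isoc (h b) a (hbij.mapsTo h2) h1, isoc b a h2 h1]
      · rw [hgout a h1, hgout b h2]
    intro a ha
    have := hrig g gbij giso a (hsub ha)
    rwa [hgin a ha] at this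
  · intro H x
    obtain ⟨εx, hεx, H'⟩ := H x
    exact ⟨εx, hεx, H' εx hεx le_rfl⟩
end

section
/- Let X be a compact ultrametric space. Then X is locally rigid if and only if there exists ε_X > 0 such that for every ε with 0 < ε ≤ ε_X and every x ∈ X, every isometry of the open ball B(x,ε) onto itself is the identity. -/
/-- A compact ultrametric space `X` is locally rigid if and only if there exists a
uniform `ε_X > 0` such that for every `0 < ε ≤ ε_X` and every `x ∈ X`, every isometry
of `B(x,ε)` onto itself is the identity. -/
theorem compact_locallyRigid_iff_uniform {X : Type*} [MetricSpace X] [CompactSpace X]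
    (ultra : ∀ x y z : X, dist x y ≤ max (dist x z) (dist z y)) :
    LocallyRigid X ↔
      ∃ εX > 0, ∀ ε : ℝ, 0 < ε → ε ≤ εX → ∀ x : X,
        ∀ h : X → X,
          Set.BijOn h (Metric.ball x ε) (Metric.ball x ε) →
          (∀ a ∈ Metric.ball x ε, ∀ b ∈ Metric.ball x ε, dist (h a) (h b) = dist a b) →
          ∀ a ∈ Metric.ball x ε, h a = a := by
  constructor
  · intro hLR
    classical
    choose ε hεpos hrig using hLR
    obtain ⟨s, hs⟩ := isCompact_univ.elim_finite_subcover (fun x => Metric.ball x (ε x))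
      (fun x => Metric.isOpen_ball)
      (fun x _ => Set.mem_iUnion.2 ⟨x, Metric.mem_ball_self (hεpos x)⟩)
    by_cases hX : Nonempty X
    · obtain ⟨x0⟩ := hX
      have hne : s.Nonempty := by
        obtain ⟨i, hi, -⟩ := Set.mem_iUnion₂.1 (hs (Set.mem_univ x0))
        exact ⟨i, hi⟩
      refine ⟨s.inf' hne ε, (Finset.lt_inf'_iff hne).2 fun i _ => hεpos i, ?_⟩
      intro δ hδ hδle x h hbij hiso a ha
      obtain ⟨i, hi, hxi⟩ := Set.mem_iUnion₂.1 (hs (Set.mem_univ x))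
      have hδi : δ ≤ ε i := hδle.trans (Finset.inf'_le ε hi)
      have hxilt : dist x i < ε i := Metric.mem_ball.1 hxi
      -- small ball is inside big ball
      have hsub : Metric.ball x δ ⊆ Metric.ball i (ε i) := by
        intro y hy
        have hy' : dist y x < δ := Metric.mem_ball.1 hy
        have : dist y i ≤ max (dist y x) (dist x i) := ultra y i x
        have : dist y i < ε i :=
          lt_of_le_of_lt this (max_lt (lt_of_lt_of_le hy' hδi) hxilt)
        exact Metric.mem_ball.2 this
      -- key ultrametric fact
      have key : ∀ c, dist c x < δ → ∀ b, δ ≤ dist b x → dist c b = dist x b := by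
        intro c hc b hb
        have hcb : dist c b ≤ dist x b := by
          have hcx : dist c x ≤ dist x b := hc.le.trans (hb.trans_eq (dist_comm b x))
          exact (ultra c b x).trans (max_le hcx le_rfl)
        have hxb : dist x b ≤ dist c b := by
          have h1 := ultra x b c
          rcases max_cases (dist x c) (dist c b) with ⟨he, -⟩ | ⟨he, -⟩
          · exfalso
            have : dist x b < δ := lt_of_le_of_lt (h1.trans_eq he) (dist_comm c x ▸ hc)
            exact absurd (dist_comm b x ▸ hb) (not_le.2 this)
          · exact h1.trans_eq he
        exact le_antisymm hcb hxb
      -- extend h by identity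
      set H : X → X := fun y => if y ∈ Metric.ball x δ then h y else y with hHdef
      have hHin : ∀ y ∈ Metric.ball x δ, H y = h y := fun y hy => if_pos hy
      have hHout : ∀ y, y ∉ Metric.ball x δ → H y = y := fun y hy => if_neg hy
      have hmaps : ∀ y ∈ Metric.ball x δ, h y ∈ Metric.ball x δ := hbij.mapsTo
      have hHbij : Set.BijOn H (Metric.ball i (ε i)) (Metric.ball i (ε i)) := by
        refine ⟨?_, ?_, ?_⟩
        · intro y hy
          by_cases hym : y ∈ Metric.ball x δ
          · rw [hHin y hym]; exact hsub (hmaps y hym)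
          · rw [hHout y hym]; exact hy
        · intro a1 ha1 a2 ha2 heq
          by_cases h1 : a1 ∈ Metric.ball x δ <;> by_cases h2 : a2 ∈ Metric.ball x δ
          · rw [hHin a1 h1, hHin a2 h2] at heq
            exact hbij.injOn h1 h2 heq
          · rw [hHin a1 h1, hHout a2 h2] at heq
            exact absurd (heq ▸ hmaps a1 h1) h2
          · rw [hHout a1 h1, hHin a2 h2] at heq
            exact absurd (heq ▸ hmaps a2 h2) h1
          · rwa [hHout a1 h1, hHout a2 h2] at heq
        · intro b hb
          by_cases hbm : b ∈ Metric.ball x δ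
          · obtain ⟨a', ha', hab⟩ := hbij.surjOn hbm
            exact ⟨a', hsub ha', by rw [hHin a' ha']; exact hab⟩
          · exact ⟨b, hb, hHout b hbm⟩
      have hHiso : ∀ a ∈ Metric.ball i (ε i), ∀ b ∈ Metric.ball i (ε i),
          dist (H a) (H b) = dist a b := by
        intro a1 _ b1 _
        by_cases h1 : a1 ∈ Metric.ball x δ <;> by_cases h2 : b1 ∈ Metric.ball x δ
        · rw [hHin a1 h1, hHin b1 h2]; exact hiso a1 h1 b1 h2
        · rw [hHin a1 h1, hHout b1 h2]
          have hb1 : δ ≤ dist b1 x := not_lt.1 (fun hc => h2 (Metric.mem_ball.2 hc))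
          rw [key (h a1) (Metric.mem_ball.1 (hmaps a1 h1)) b1 hb1,
            key a1 (Metric.mem_ball.1 h1) b1 hb1]
        · rw [hHout a1 h1, hHin b1 h2]
          have ha1' : δ ≤ dist a1 x := not_lt.1 (fun hc => h1 (Metric.mem_ball.2 hc))
          rw [dist_comm a1 (h b1), dist_comm a1 b1,
            key (h b1) (Metric.mem_ball.1 (hmaps b1 h2)) a1 ha1',
            key b1 (Metric.mem_ball.1 h2) a1 ha1']
        · rw [hHout a1 h1, hHout b1 h2]
      have := hrig i H hHbij hHiso a (hsub ha)
      rwa [hHin a ha] at this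
    · exact ⟨1, one_pos, fun δ _ _ x h _ _ a _ => (hX ⟨a⟩).elim⟩
  · rintro ⟨εX, hεX, huni⟩ x
    exact ⟨εX, hεX, huni εX hεX le_rfl x⟩
end

section
/- For an ultrametric space (X,d) the following are equivalent: (1) X is locally rigid; (2) for every local similarity h : X → X and every x ∈ X such that h x = x and h restricts to an isometry of some open ball B(x,ε) onto B(x,ε), there exists δ > 0 with h y = y for all y ∈ B(x,δ); (3) the statement of (2) restricted to local isometries h : X → X; (4) the statement of (2) restricted to bijective isometries h : X → X. -/
/-- A local similarity of a metric space `X`: a bijection `h : X → X` such that every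
point `x` has a ball `B(x,ε)` on which `h` restricts to a `λ`-similarity onto
`B(h x, λ·ε)` for some `λ > 0`. -/
def IsLocalSimilarity {X : Type*} [MetricSpace X] (h : X → X) : Prop :=
  Function.Bijective h ∧ ∀ x : X, ∃ ε > 0, ∃ lam > 0,
    Set.BijOn h (Metric.ball x ε) (Metric.ball (h x) (lam * ε)) ∧
    ∀ a ∈ Metric.ball x ε, ∀ b ∈ Metric.ball x ε, dist (h a) (h b) = lam * dist a b

section
variable {X : Type*} [MetricSpace X]

lemma ultra_iso (ultra : ∀ x y z : X, dist x y ≤ max (dist x z) (dist z y))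
    {x y z : X} (h : dist x y < dist x z) : dist y z = dist x z := by
  have h1 : dist y z ≤ dist x z := by
    have h0 := ultra y z x
    rw [dist_comm y x] at h0
    exact h0.trans (max_le h.le le_rfl)
  have h2 : dist x z ≤ dist y z := by
    have h0 := ultra x z y
    rcases max_cases (dist x y) (dist y z) with ⟨he, _⟩ | ⟨he, _⟩
    · rw [he] at h0; linarith
    · rw [he] at h0; exact h0
  linarith

lemma cross_dist (ultra : ∀ x y z : X, dist x y ≤ max (dist x z) (dist z y))
    {a b u v : X} (hu : dist u a < dist a b) (hv : dist v b < dist a b) :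
    dist u v = dist a b := by
  have h1 : dist u b = dist a b := ultra_iso ultra (by rwa [dist_comm a u])
  have h2 : dist v u = dist b u := by
    refine ultra_iso ultra ?_
    rw [dist_comm b v, dist_comm b u, h1]
    exact hv
  rw [dist_comm u v, h2, dist_comm b u, h1]

lemma out_dist (ultra : ∀ x y z : X, dist x y ≤ max (dist x z) (dist z y))
    {a b w : X} (h1 : ¬ dist w a < dist a b) (h2 : ¬ dist w b < dist a b) :
    dist a w = dist b w := by
  push_neg at h1 h2
  rw [dist_comm w a] at h1
  rw [dist_comm w b] at h2
  rcases lt_or_eq_of_le h1 with hlt | he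
  · exact (ultra_iso ultra hlt).symm
  · have h0 := ultra b w a
    rw [dist_comm b a] at h0
    have hle : dist b w ≤ dist a b := h0.trans (by rw [← he]; exact max_le le_rfl le_rfl)
    linarith

lemma swap_lemma (ultra : ∀ x y z : X, dist x y ≤ max (dist x z) (dist z y))
    {x : X} {ε : ℝ}
    {g : X → X} (hbij : Set.BijOn g (Metric.ball x ε) (Metric.ball x ε))
    (hiso : ∀ a ∈ Metric.ball x ε, ∀ b ∈ Metric.ball x ε, dist (g a) (g b) = dist a b)
    {a : X} (ha : a ∈ Metric.ball x ε) (hm : g a ≠ a) :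
    ∃ h : X → X,
      (∀ u v, dist (h u) (h v) = dist u v) ∧
      (∀ u, h (h u) = u) ∧
      (∀ u, dist u a < dist a (g a) → dist (h u) (g a) < dist a (g a)) ∧
      (∀ u, dist u (g a) < dist a (g a) → dist (h u) a < dist a (g a)) ∧
      (∀ u, ¬ dist u a < dist a (g a) → ¬ dist u (g a) < dist a (g a) → h u = u) ∧
      h a = g a := by
  classical
  set b := g a with hbdef
  set r := dist a b with hrdef
  have hrpos : 0 < r := dist_pos.mpr (Ne.symm hm)
  have hb_mem : b ∈ Metric.ball x ε := hbij.mapsTo ha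
  have hax : dist a x < ε := Metric.mem_ball.mp ha
  have hbx : dist b x < ε := Metric.mem_ball.mp hb_mem
  have hA_sub : ∀ u, dist u a < r → u ∈ Metric.ball x ε := by
    intro u hu
    have h0 := ultra u x a
    rw [Metric.mem_ball]
    refine lt_of_le_of_lt h0 (max_lt ?_ hax)
    rw [dist_comm u a] at hu
    calc dist u a < r := by rwa [dist_comm a u] at hu
    _ = dist a b := rfl
    _ ≤ max (dist a x) (dist x b) := ultra a b x
    _ < ε := max_lt hax (by rwa [dist_comm x b])
  have hB_sub : ∀ u, dist u b < r → u ∈ Metric.ball x ε := by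
    intro u hu
    have h0 := ultra u x b
    rw [Metric.mem_ball]
    refine lt_of_le_of_lt h0 (max_lt ?_ hbx)
    calc dist u b < r := hu
    _ = dist a b := rfl
    _ ≤ max (dist a x) (dist x b) := ultra a b x
    _ < ε := max_lt hax (by rwa [dist_comm x b])
  haveI : Nonempty X := ⟨a⟩
  set gi := Function.invFunOn g (Metric.ball x ε) with hgidef
  have hgi_left : ∀ u ∈ Metric.ball x ε, gi (g u) = u :=
    fun u hu => hbij.injOn.leftInvOn_invFunOn hu
  have hgi_right : ∀ v ∈ Metric.ball x ε, g (gi v) = v := by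
    intro v hv
    obtain ⟨u, hu, huv⟩ := hbij.surjOn hv
    exact Function.invFunOn_eq ⟨u, hu, huv⟩
  have hgi_mem : ∀ v ∈ Metric.ball x ε, gi v ∈ Metric.ball x ε := by
    intro v hv
    obtain ⟨u, hu, huv⟩ := hbij.surjOn hv
    exact Function.invFunOn_mem ⟨u, hu, huv⟩
  have hgA : ∀ u, dist u a < r → dist (g u) b < r := by
    intro u hu
    have h0 := hiso u (hA_sub u hu) a ha
    rw [← hbdef] at h0
    rw [h0]; exact hu
  have hgiB : ∀ v, dist v b < r → dist (gi v) a < r := by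
    intro v hv
    have hvmem := hB_sub v hv
    have h0 := hiso (gi v) (hgi_mem v hvmem) a ha
    rw [hgi_right v hvmem, ← hbdef] at h0
    rw [← h0]; exact hv
  have hdisj : ∀ u, dist u a < r → ¬ dist u b < r := by
    intro u h1 h2
    have h0 := ultra a b u
    rw [dist_comm a u] at h0
    have hlt : dist a b < r := lt_of_le_of_lt h0 (max_lt h1 h2)
    rw [← hrdef] at hlt
    exact lt_irrefl r hlt
  set F : X → X := fun u => if dist u a < r then g u else if dist u b < r then gi u else u
    with hF
  have hFA : ∀ u, dist u a < r → F u = g u := by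
    intro u hu; simp only [hF, if_pos hu]
  have hFB : ∀ u, dist u b < r → F u = gi u := by
    intro u hu
    have h1 : ¬ dist u a < r := fun h => hdisj u h hu
    simp only [hF, if_neg h1, if_pos hu]
  have hFO : ∀ u, ¬ dist u a < r → ¬ dist u b < r → F u = u := by
    intro u h1 h2; simp only [hF, if_neg h1, if_neg h2]
  -- B-to-out distance facts
  have hAout : ∀ u v, dist u a < r → ¬ dist v a < r → ¬ dist v b < r →
      dist u v = dist a v := by
    intro u v hu hva _
    have hva' : r ≤ dist a v := by rw [dist_comm a v]; exact not_lt.mp hva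
    exact ultra_iso ultra (x := a) (y := u) (z := v)
      (by rw [dist_comm a u]; exact lt_of_lt_of_le hu hva')
  have hBout : ∀ u v, dist u b < r → ¬ dist v a < r → ¬ dist v b < r →
      dist u v = dist b v := by
    intro u v hu _ hvb
    have hvb' : r ≤ dist b v := by rw [dist_comm b v]; exact not_lt.mp hvb
    exact ultra_iso ultra (x := b) (y := u) (z := v)
      (by rw [dist_comm b u]; exact lt_of_lt_of_le hu hvb')
  -- main isometry, for u in A or B versus arbitrary v
  have keyA : ∀ u v, dist u a < r → dist (F u) (F v) = dist u v := by
    intro u v hu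
    rw [hFA u hu]
    by_cases hva : dist v a < r
    · rw [hFA v hva]; exact hiso u (hA_sub u hu) v (hA_sub v hva)
    · by_cases hvb : dist v b < r
      · rw [hFB v hvb]
        have h1 : dist u v = r := by
          rw [hrdef] at hu hvb ⊢; exact cross_dist ultra hu hvb
        have h2 : dist (gi v) (g u) = r := by
          have := cross_dist ultra (a := a) (b := b) (hgiB v hvb) (hgA u hu)
          rw [← hrdef] at this; exact this
        rw [dist_comm (g u) (gi v), h2, h1]
      · rw [hFO v hva hvb]
        have hod : dist a v = dist b v :=
          out_dist ultra (a := a) (b := b) (w := v)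
            (by rw [← hrdef]; exact hva) (by rw [← hrdef]; exact hvb)
        have h1 : dist u v = dist a v := hAout u v hu hva hvb
        have h2 : dist (g u) v = dist b v := hBout (g u) v (hgA u hu) hva hvb
        rw [h2, ← hod, ← h1]
  have keyB : ∀ u v, dist u b < r → dist (F u) (F v) = dist u v := by
    intro u v hu
    by_cases hva : dist v a < r
    · rw [dist_comm (F u) (F v), dist_comm u v]; exact keyA v u hva
    · rw [hFB u hu]
      by_cases hvb : dist v b < r
      · rw [hFB v hvb]
        have humem := hB_sub u hu
        have hvmem := hB_sub v hvb
        have h0 := hiso (gi u) (hgi_mem u humem) (gi v) (hgi_mem v hvmem)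
        rw [hgi_right u humem, hgi_right v hvmem] at h0
        exact h0.symm
      · rw [hFO v hva hvb]
        have hod : dist a v = dist b v :=
          out_dist ultra (a := a) (b := b) (w := v)
            (by rw [← hrdef]; exact hva) (by rw [← hrdef]; exact hvb)
        have h1 : dist u v = dist b v := hBout u v hu hva hvb
        have h2 : dist (gi u) v = dist a v := hAout (gi u) v (hgiB u hu) hva hvb
        rw [h2, hod, ← h1]
  refine ⟨F, ?_, ?_, ?_, ?_, hFO, by rw [hFA a (by rw [dist_self]; exact hrpos)]⟩
  · -- isometry
    intro u v
    by_cases hua : dist u a < r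
    · exact keyA u v hua
    · by_cases hub : dist u b < r
      · exact keyB u v hub
      · by_cases hva : dist v a < r
        · rw [dist_comm (F u) (F v), dist_comm u v]; exact keyA v u hva
        · by_cases hvb : dist v b < r
          · rw [dist_comm (F u) (F v), dist_comm u v]; exact keyB v u hvb
          · rw [hFO u hua hub, hFO v hva hvb]
  · -- involution
    intro u
    by_cases hua : dist u a < r
    · rw [hFA u hua, hFB (g u) (hgA u hua), hgi_left u (hA_sub u hua)]
    · by_cases hub : dist u b < r
      · rw [hFB u hub, hFA (gi u) (hgiB u hub), hgi_right u (hB_sub u hub)]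
      · rw [hFO u hua hub, hFO u hua hub]
  · -- A to B
    intro u hu
    rw [hFA u hu]; exact hgA u hu
  · -- B to A
    intro u hu
    rw [hFB u hu]; exact hgiB u hu

lemma step_lemma (ultra : ∀ x y z : X, dist x y ≤ max (dist x z) (dist z y))
    {x : X} {ε : ℝ}
    {g : X → X} (hbij : Set.BijOn g (Metric.ball x ε) (Metric.ball x ε))
    (hiso : ∀ a ∈ Metric.ball x ε, ∀ b ∈ Metric.ball x ε, dist (g a) (g b) = dist a b)
    {a0 : X} (ha0 : a0 ∈ Metric.ball x ε) (hm0 : g a0 ≠ a0) :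
    (∃ (h : X → X) (t : ℝ) (p : X), 0 < t ∧
       (∀ u v, dist (h u) (h v) = dist u v) ∧ (∀ u, h (h u) = u) ∧
       (∀ u, dist u x < t → h u = u) ∧ (∀ u, ε ≤ dist u x → h u = u) ∧
       dist p x < ε ∧ h p ≠ p) ∨
    (∃ (h : X → X) (s : ℝ), 0 < s ∧ s < ε ∧
       (∀ u v, dist (h u) (h v) = dist u v) ∧ (∀ u, h (h u) = u) ∧
       (∀ u, s < dist u x → h u = u) ∧ (∀ u, dist u x < s → dist (h u) x = s)) := by
  classical
  by_cases hgood : ∃ c ∈ Metric.ball x ε, g c ≠ c ∧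
      dist c (g c) ≤ dist c x ∧ dist c (g c) ≤ dist (g c) x
  · obtain ⟨c, hc, hmc, hc1, hc2⟩ := hgood
    obtain ⟨h, hIso, hInv, hAB, hBA, hOut, hac⟩ := swap_lemma ultra hbij hiso hc hmc
    set r := dist c (g c) with hr
    have hrpos : 0 < r := dist_pos.mpr (fun e => hmc e.symm)
    have hAx : ∀ u, dist u c < r → dist u x = dist c x := by
      intro u hu
      exact ultra_iso ultra (x := c) (y := u) (z := x)
        (by rw [dist_comm c u]; exact lt_of_lt_of_le hu hc1)
    have hBx : ∀ u, dist u (g c) < r → dist u x = dist (g c) x := by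
      intro u hu
      exact ultra_iso ultra (x := g c) (y := u) (z := x)
        (by rw [dist_comm (g c) u]; exact lt_of_lt_of_le hu hc2)
    left
    refine ⟨h, r, c, hrpos, hIso, hInv, ?_, ?_, Metric.mem_ball.mp hc, by rw [hac]; exact hmc⟩
    · intro u hu
      refine hOut u (fun hA => ?_) (fun hB => ?_)
      · rw [hAx u hA] at hu; exact absurd hu (not_lt.mpr hc1)
      · rw [hBx u hB] at hu; exact absurd hu (not_lt.mpr hc2)
    · intro u hu
      refine hOut u (fun hA => ?_) (fun hB => ?_)
      · rw [hAx u hA] at hu; exact absurd (Metric.mem_ball.mp hc) (not_lt.mpr hu)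
      · rw [hBx u hB] at hu
        exact absurd (Metric.mem_ball.mp (hbij.mapsTo hc)) (not_lt.mpr hu)
  · -- bad case
    have hxin : dist x a0 < dist a0 (g a0) ∨ dist x (g a0) < dist a0 (g a0) := by
      by_contra hcon
      push_neg at hcon
      refine hgood ⟨a0, ha0, hm0, ?_, ?_⟩
      · rw [dist_comm a0 x]; exact hcon.1
      · rw [dist_comm (g a0) x]; exact hcon.2
    obtain ⟨h, hIso, hInv, hAB, hBA, hOut, hac⟩ := swap_lemma ultra hbij hiso ha0 hm0
    set r := dist a0 (g a0) with hr
    have hrpos : 0 < r := dist_pos.mpr (fun e => hm0 e.symm)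
    have hrε : r < ε := by
      rw [hr]
      calc dist a0 (g a0) ≤ max (dist a0 x) (dist x (g a0)) := ultra a0 (g a0) x
      _ < ε := max_lt (Metric.mem_ball.mp ha0)
          (by rw [dist_comm x (g a0)]; exact Metric.mem_ball.mp (hbij.mapsTo ha0))
    right
    refine ⟨h, r, hrpos, hrε, hIso, hInv, ?_, ?_⟩
    · -- support in closed ball r
      intro u hu
      refine hOut u (fun hA => ?_) (fun hB => ?_)
      · -- u ∈ A: dist u x ≤ r
        rcases hxin with hxA | hxB
        · have : dist u x ≤ max (dist u a0) (dist a0 x) := ultra u x a0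
          have hle : dist u x ≤ r :=
            this.trans (max_le hA.le (by rw [dist_comm a0 x]; exact hxA.le))
          exact absurd hu (not_lt.mpr hle)
        · have : dist u x = r := cross_dist ultra (a := a0) (b := g a0) hA hxB
          exact absurd hu (not_lt.mpr this.le)
      · rcases hxin with hxA | hxB
        · have : dist x u = r := cross_dist ultra (a := a0) (b := g a0) hxA hB
          rw [dist_comm u x, this] at hu
          exact lt_irrefl r hu
        · have : dist u x ≤ max (dist u (g a0)) (dist (g a0) x) := ultra u x (g a0)
          have hle : dist u x ≤ r :=
            this.trans (max_le hB.le (by rw [dist_comm (g a0) x]; exact hxB.le))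
          exact absurd hu (not_lt.mpr hle)
    · -- maps small ball to sphere r
      intro u hu
      rcases hxin with hxA | hxB
      · have huA : dist u a0 < r := by
          have : dist u a0 ≤ max (dist u x) (dist x a0) := ultra u a0 x
          exact lt_of_le_of_lt this (max_lt hu hxA)
        have hhuB : dist (h u) (g a0) < r := hAB u huA
        have : dist x (h u) = r := cross_dist ultra (a := a0) (b := g a0) hxA hhuB
        rw [dist_comm (h u) x]; exact this
      · have huB : dist u (g a0) < r := by
          have : dist u (g a0) ≤ max (dist u x) (dist x (g a0)) := ultra u (g a0) x
          exact lt_of_le_of_lt this (max_lt hu hxB)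
        have hhuA : dist (h u) a0 < r := hBA u huB
        exact cross_dist ultra (a := a0) (b := g a0) hhuA hxB

lemma lemA (ultra : ∀ x y z : X, dist x y ≤ max (dist x z) (dist z y)) {x : X}
    (hx : ∀ ε : ℝ, 0 < ε → ∃ g : X → X,
      Set.BijOn g (Metric.ball x ε) (Metric.ball x ε) ∧
      (∀ a ∈ Metric.ball x ε, ∀ b ∈ Metric.ball x ε, dist (g a) (g b) = dist a b) ∧
      ∃ a ∈ Metric.ball x ε, g a ≠ a) :
    ∀ ε : ℝ, 0 < ε → ∃ (h : X → X) (t : ℝ) (p : X), 0 < t ∧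
      (∀ u v, dist (h u) (h v) = dist u v) ∧ (∀ u, h (h u) = u) ∧
      (∀ u, dist u x < t → h u = u) ∧ (∀ u, ε ≤ dist u x → h u = u) ∧
      dist p x < ε ∧ h p ≠ p := by
  intro ε hε
  obtain ⟨g, hbij, hiso, a, ha, hma⟩ := hx ε hε
  rcases step_lemma ultra hbij hiso ha hma with done |
    ⟨h0, s0, hs0pos, hs0ε, hiso0, hinv0, hfix0, hmap0⟩
  · exact done
  · have hx0 : dist (h0 x) x = s0 := hmap0 x (by rw [dist_self]; exact hs0pos)
    obtain ⟨g1, hbij1, hiso1, a1, ha1, hma1⟩ := hx s0 hs0pos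
    rcases step_lemma ultra hbij1 hiso1 ha1 hma1 with
      ⟨h, t, p, htpos, hi, hv, hf1, hf2, hp1, hp2⟩ |
      ⟨h1, s1, hs1pos, hs1s0, hiso1', hinv1, hfix1, hmap1⟩
    · exact ⟨h, t, p, htpos, hi, hv, hf1,
        fun u hu => hf2 u (le_trans hs0ε.le hu), lt_trans hp1 hs0ε, hp2⟩
    · have hx1 : dist (h1 x) x = s1 := hmap1 x (by rw [dist_self]; exact hs1pos)
      have hinj0 : Function.Injective h0 := by
        intro u v huv
        have : h0 (h0 u) = h0 (h0 v) := by rw [huv]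
        rwa [hinv0, hinv0] at this
      refine ⟨fun u => h0 (h1 (h0 u)), s0, h0 x, hs0pos, ?_, ?_, ?_, ?_,
        by rw [hx0]; exact hs0ε, ?_⟩
      · intro u v; rw [hiso0, hiso1', hiso0]
      · intro u; simp only [hinv0, hinv1]
      · intro u hu
        show h0 (h1 (h0 u)) = u
        have e1 : h1 (h0 u) = h0 u := hfix1 _ (by rw [hmap0 u hu]; exact hs1s0)
        rw [e1, hinv0]
      · intro u hu
        show h0 (h1 (h0 u)) = u
        have e0 : h0 u = u := hfix0 u (lt_of_lt_of_le hs0ε hu)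
        have e1 : h1 u = u := hfix1 u (lt_of_lt_of_le (lt_trans hs1s0 hs0ε) hu)
        rw [e0, e1, e0]
      · show h0 (h1 (h0 (h0 x))) ≠ h0 x
        rw [hinv0]
        intro hcon
        have : h1 x = x := hinj0 hcon
        rw [this, dist_self] at hx1
        exact absurd hx1.symm (ne_of_gt hs1pos)

lemma four_implies_one (ultra : ∀ x y z : X, dist x y ≤ max (dist x z) (dist z y))
    (h4 : ∀ h : X → X, (Function.Bijective h ∧ ∀ a b : X, dist (h a) (h b) = dist a b) →
        ∀ x : X, h x = x →
        (∃ ε > 0, Set.BijOn h (Metric.ball x ε) (Metric.ball x ε) ∧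
          ∀ a ∈ Metric.ball x ε, ∀ b ∈ Metric.ball x ε, dist (h a) (h b) = dist a b) →
        ∃ δ > 0, ∀ y ∈ Metric.ball x δ, h y = y) : LocallyRigid X := by
  classical
  by_contra hnr
  rw [LocallyRigid] at hnr
  push_neg at hnr
  obtain ⟨x, hx⟩ := hnr
  have hx' : ∀ ε : ℝ, 0 < ε → ∃ g : X → X,
      Set.BijOn g (Metric.ball x ε) (Metric.ball x ε) ∧
      (∀ a ∈ Metric.ball x ε, ∀ b ∈ Metric.ball x ε, dist (g a) (g b) = dist a b) ∧
      ∃ a ∈ Metric.ball x ε, g a ≠ a := by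
    intro ε hε
    obtain ⟨g, hb, hi, a, ha, hma⟩ := hx ε hε
    exact ⟨g, hb, hi, a, ha, hma⟩
  have key := lemA ultra hx'
  have key' : ∀ ε : ℝ, ∃ (h : X → X) (t : ℝ) (p : X), 0 < ε → (0 < t ∧
      (∀ u v, dist (h u) (h v) = dist u v) ∧ (∀ u, h (h u) = u) ∧
      (∀ u, dist u x < t → h u = u) ∧ (∀ u, ε ≤ dist u x → h u = u) ∧
      dist p x < ε ∧ h p ≠ p) := by
    intro ε
    by_cases hε : 0 < ε
    · obtain ⟨h, t, p, props⟩ := key ε hε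
      exact ⟨h, t, p, fun _ => props⟩
    · exact ⟨id, 1, x, fun c => absurd c hε⟩
  choose H T P spec using key'
  -- the sequence of scales
  let seq : ℕ → ℝ := fun n => Nat.recAux 1 (fun _ s => min (T s) (s / 2)) n
  have seq0 : seq 0 = 1 := rfl
  have seqS : ∀ n, seq (n + 1) = min (T (seq n)) (seq n / 2) := fun n => rfl
  have seqpos : ∀ n, 0 < seq n := by
    intro n; induction n with
    | zero => rw [seq0]; norm_num
    | succ n ih => rw [seqS]; exact lt_min (spec _ ih).1 (by linarith)
  have seqhalf : ∀ n, seq (n + 1) ≤ seq n / 2 := fun n => by rw [seqS]; exact min_le_right _ _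
  have seqT : ∀ n, seq (n + 1) ≤ T (seq n) := fun n => by rw [seqS]; exact min_le_left _ _
  have seqlt : ∀ n, seq (n + 1) < seq n := fun n =>
    lt_of_le_of_lt (seqhalf n) (by linarith [seqpos n])
  have seqanti : ∀ m n, m ≤ n → seq n ≤ seq m := by
    intro m n hmn
    induction n with
    | zero => rw [Nat.le_zero.mp hmn]
    | succ n ih =>
      rcases Nat.lt_or_ge m (n + 1) with hlt | hge
      · exact le_trans (seqlt n).le (ih (Nat.lt_succ_iff.mp hlt))
      · rw [Nat.le_antisymm hmn hge]
  have seqbound : ∀ n, seq n ≤ (1 / 2 : ℝ) ^ n := by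
    intro n; induction n with
    | zero => rw [seq0]; norm_num
    | succ n ih =>
      calc seq (n + 1) ≤ seq n / 2 := seqhalf n
      _ ≤ (1 / 2 : ℝ) ^ n / 2 := by linarith
      _ = (1 / 2 : ℝ) ^ (n + 1) := by ring
  -- spec at seq n
  have specn : ∀ n, 0 < T (seq n) ∧
      (∀ u v, dist (H (seq n) u) (H (seq n) v) = dist u v) ∧
      (∀ u, H (seq n) (H (seq n) u) = u) ∧
      (∀ u, dist u x < T (seq n) → H (seq n) u = u) ∧
      (∀ u, seq n ≤ dist u x → H (seq n) u = u) ∧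
      dist (P (seq n)) x < seq n ∧ H (seq n) (P (seq n)) ≠ P (seq n) :=
    fun n => spec (seq n) (seqpos n)
  have hfixx : ∀ n, H (seq n) x = x := fun n =>
    (specn n).2.2.2.1 x (by rw [dist_self]; exact (specn n).1)
  have hdist : ∀ n u, dist (H (seq n) u) x = dist u x := by
    intro n u
    have h0 := (specn n).2.1 u x
    rwa [hfixx n] at h0
  have hfixout : ∀ n u, ¬ (T (seq n) ≤ dist u x ∧ dist u x < seq n) → H (seq n) u = u := by
    intro n u hn
    rcases not_and_or.mp hn with hcase | hcase
    · exact (specn n).2.2.2.1 u (not_le.mp hcase)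
    · exact (specn n).2.2.2.2.1 u (not_lt.mp hcase)
  -- uniqueness of annulus index
  have uniq : ∀ (u : X) (m n : ℕ),
      (T (seq m) ≤ dist u x ∧ dist u x < seq m) →
      (T (seq n) ≤ dist u x ∧ dist u x < seq n) → m = n := by
    intro u m n hm hn
    rcases lt_trichotomy m n with hlt | heq | hlt
    · have h1 : seq n ≤ T (seq m) := le_trans (seqanti (m + 1) n hlt) (seqT m)
      linarith [hm.1, hn.2]
    · exact heq
    · have h1 : seq m ≤ T (seq n) := le_trans (seqanti (n + 1) m hlt) (seqT n)
      linarith [hn.1, hm.2]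
  -- the combined map
  letI : ∀ p : Prop, Decidable p := fun p => Classical.propDecidable p
  set Hb : X → X := fun u =>
    if hc : ∃ n, T (seq n) ≤ dist u x ∧ dist u x < seq n then H (seq (hc.choose)) u else u
    with hHb
  have Hb_eq : ∀ n u, T (seq n) ≤ dist u x → dist u x < seq n → Hb u = H (seq n) u := by
    intro n u h1 h2
    have hc : ∃ k, T (seq k) ≤ dist u x ∧ dist u x < seq k := ⟨n, h1, h2⟩
    simp only [hHb, dif_pos hc]
    rw [uniq u (hc.choose) n (hc.choose_spec) ⟨h1, h2⟩]
  have Hb_id : ∀ u, (∀ n, ¬ (T (seq n) ≤ dist u x ∧ dist u x < seq n)) → Hb u = u := by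
    intro u hu
    simp only [hHb, dif_neg (not_exists.mpr hu)]
  have Hb_dist : ∀ u, dist (Hb u) x = dist u x := by
    intro u
    by_cases hc : ∃ n, T (seq n) ≤ dist u x ∧ dist u x < seq n
    · obtain ⟨n, h1, h2⟩ := hc
      rw [Hb_eq n u h1 h2, hdist n u]
    · rw [Hb_id u (not_exists.mp hc)]
  have Hb_inv : ∀ u, Hb (Hb u) = u := by
    intro u
    by_cases hc : ∃ n, T (seq n) ≤ dist u x ∧ dist u x < seq n
    · obtain ⟨n, h1, h2⟩ := hc
      rw [Hb_eq n u h1 h2]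
      have hd := hdist n u
      rw [Hb_eq n _ (by rw [hd]; exact h1) (by rw [hd]; exact h2)]
      exact (specn n).2.2.1 u
    · have h0 := Hb_id u (not_exists.mp hc)
      rw [h0, h0]
  have cross : ∀ p q : X, dist q x < dist p x → dist p q = dist p x := by
    intro p q hpq
    rw [dist_comm p q, dist_comm p x]
    refine ultra_iso ultra (x := x) (y := q) (z := p) ?_
    rw [dist_comm x q, dist_comm x p]
    exact hpq
  have Hb_iso : ∀ u v, dist (Hb u) (Hb v) = dist u v := by
    have main : ∀ u v : X, dist u x ≤ dist v x → dist (Hb u) (Hb v) = dist u v := by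
      intro u v huv
      rcases eq_or_lt_of_le huv with heq | hlt
      · by_cases hu : ∃ m, T (seq m) ≤ dist u x ∧ dist u x < seq m
        · obtain ⟨m, hu1, hu2⟩ := hu
          rw [Hb_eq m u hu1 hu2, Hb_eq m v (heq ▸ hu1) (heq ▸ hu2)]
          exact (specn m).2.1 u v
        · have hv : ∀ n, ¬ (T (seq n) ≤ dist v x ∧ dist v x < seq n) := by
            intro n hn
            exact (not_exists.mp hu) n ⟨heq ▸ hn.1, heq ▸ hn.2⟩
          rw [Hb_id u (not_exists.mp hu), Hb_id v hv]
      · have e1 : dist u v = dist v x := by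
          rw [dist_comm u v]; exact cross v u hlt
        have e2 : dist (Hb u) (Hb v) = dist v x := by
          rw [dist_comm (Hb u) (Hb v)]
          have : dist (Hb v) (Hb u) = dist (Hb v) x :=
            cross (Hb v) (Hb u) (by rw [Hb_dist u, Hb_dist v]; exact hlt)
          rw [this, Hb_dist v]
        rw [e2, e1]
    intro u v
    rcases le_total (dist u x) (dist v x) with hle | hle
    · exact main u v hle
    · rw [dist_comm (Hb u) (Hb v), dist_comm u v]; exact main v u hle
  have Hb_x : Hb x = x := by
    refine Hb_id x (fun n hn => ?_)
    rw [dist_self] at hn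
    exact absurd hn.1 (not_le.mpr (specn n).1)
  -- apply hypothesis (4)
  have Hb_bijOn : Set.BijOn Hb (Metric.ball x 1) (Metric.ball x 1) := by
    refine ⟨fun u hu => ?_, fun u _ v _ e => ?_, fun v hv => ?_⟩
    · rw [Metric.mem_ball] at hu ⊢; rwa [Hb_dist u]
    · have : Hb (Hb u) = Hb (Hb v) := by rw [e]
      rwa [Hb_inv, Hb_inv] at this
    · exact ⟨Hb v, by rw [Metric.mem_ball, Hb_dist v]; exact Metric.mem_ball.mp hv,
        Hb_inv v⟩
  obtain ⟨δ, hδ, hfix⟩ := h4 Hb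
    ⟨Function.Involutive.bijective Hb_inv, Hb_iso⟩ x Hb_x
    ⟨1, one_pos, Hb_bijOn, fun a _ b _ => Hb_iso a b⟩
  obtain ⟨n, hn⟩ : ∃ n : ℕ, (1 / 2 : ℝ) ^ n < δ :=
    exists_pow_lt_of_lt_one hδ (by norm_num)
  have hseqδ : seq n < δ := lt_of_le_of_lt (seqbound n) hn
  set p := P (seq n) with hp
  have hpmoved : H (seq n) p ≠ p := (specn n).2.2.2.2.2.2
  have hpann : T (seq n) ≤ dist p x ∧ dist p x < seq n := by
    refine ⟨?_, (specn n).2.2.2.2.2.1⟩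
    by_contra hcon
    exact hpmoved ((specn n).2.2.2.1 p (not_le.mp hcon))
  have h1 : Hb p = p := hfix p (Metric.mem_ball.mpr (lt_trans hpann.2 hseqδ))
  rw [Hb_eq n p hpann.1 hpann.2] at h1
  exact hpmoved h1

lemma extend_iso (ultra : ∀ x y z : X, dist x y ≤ max (dist x z) (dist z y))
    {x : X} {δ ε : ℝ} (hδε : δ ≤ ε) {h : X → X}
    (hbij : Set.BijOn h (Metric.ball x δ) (Metric.ball x δ))
    (hiso : ∀ a ∈ Metric.ball x δ, ∀ b ∈ Metric.ball x δ, dist (h a) (h b) = dist a b) :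
    ∃ g : X → X, Set.BijOn g (Metric.ball x ε) (Metric.ball x ε) ∧
      (∀ a ∈ Metric.ball x ε, ∀ b ∈ Metric.ball x ε, dist (g a) (g b) = dist a b) ∧
      ∀ u ∈ Metric.ball x δ, g u = h u := by
  classical
  set g : X → X := fun u => if dist u x < δ then h u else u with hg
  have hgin : ∀ u, dist u x < δ → g u = h u := fun u hu => by simp only [hg, if_pos hu]
  have hgout : ∀ u, ¬ dist u x < δ → g u = u := fun u hu => by simp only [hg, if_neg hu]
  have hmem : ∀ u, dist u x < δ → dist (h u) x < δ := fun u hu =>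
    Metric.mem_ball.mp (hbij.mapsTo (Metric.mem_ball.mpr hu))
  have cross : ∀ p q : X, dist q x < dist p x → dist p q = dist p x := by
    intro p q hpq
    rw [dist_comm p q, dist_comm p x]
    refine ultra_iso ultra (x := x) (y := q) (z := p) ?_
    rw [dist_comm x q, dist_comm x p]
    exact hpq
  have key : ∀ u v, dist u x < δ → ¬ dist v x < δ → dist (h u) v = dist u v := by
    intro u v hu hv
    have h1 : dist v u = dist v x := cross v u (lt_of_lt_of_le hu (not_lt.mp hv))
    have h2 : dist v (h u) = dist v x := cross v (h u) (lt_of_lt_of_le (hmem u hu) (not_lt.mp hv))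
    rw [dist_comm (h u) v, h2, dist_comm u v, h1]
  refine ⟨g, ⟨?_, ?_, ?_⟩, ?_, fun u hu => hgin u (Metric.mem_ball.mp hu)⟩
  · -- maps to
    intro u hu
    by_cases hid : dist u x < δ
    · rw [hgin u hid]
      exact Metric.mem_ball.mpr (lt_of_lt_of_le (hmem u hid) hδε)
    · rwa [hgout u hid]
  · -- inj on
    intro u hu v hv e
    by_cases hu' : dist u x < δ
    · by_cases hv' : dist v x < δ
      · rw [hgin u hu', hgin v hv'] at e
        exact hbij.injOn (Metric.mem_ball.mpr hu') (Metric.mem_ball.mpr hv') e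
      · rw [hgin u hu', hgout v hv'] at e
        exact absurd (e ▸ hmem u hu') hv'
    · by_cases hv' : dist v x < δ
      · rw [hgout u hu', hgin v hv'] at e
        exact absurd (e ▸ hmem v hv') hu'
      · rwa [hgout u hu', hgout v hv'] at e
  · -- surj on
    intro v hv
    by_cases hv' : dist v x < δ
    · obtain ⟨u, hu, he⟩ := hbij.surjOn (Metric.mem_ball.mpr hv')
      have hu' : dist u x < δ := Metric.mem_ball.mp hu
      exact ⟨u, Metric.mem_ball.mpr (lt_of_lt_of_le hu' hδε), by rw [hgin u hu']; exact he⟩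
    · exact ⟨v, hv, hgout v hv'⟩
  · -- isometry on ball ε
    intro u hu v hv
    by_cases hu' : dist u x < δ
    · rw [hgin u hu']
      by_cases hv' : dist v x < δ
      · rw [hgin v hv']
        exact hiso u (Metric.mem_ball.mpr hu') v (Metric.mem_ball.mpr hv')
      · rw [hgout v hv']
        exact key u v hu' hv'
    · rw [hgout u hu']
      by_cases hv' : dist v x < δ
      · rw [hgin v hv', dist_comm u (h v), dist_comm u v]
        exact key v u hv' hu'
      · rw [hgout v hv']

lemma one_implies_two' (ultra : ∀ x y z : X, dist x y ≤ max (dist x z) (dist z y))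
    (hrig : LocallyRigid X) :
    ∀ h : X → X, ∀ x : X, h x = x →
      (∃ ε > 0, Set.BijOn h (Metric.ball x ε) (Metric.ball x ε) ∧
        ∀ a ∈ Metric.ball x ε, ∀ b ∈ Metric.ball x ε, dist (h a) (h b) = dist a b) →
      ∃ δ > 0, ∀ y ∈ Metric.ball x δ, h y = y := by
  intro h x hxfix hball
  obtain ⟨ε, hε, hbij, hiso⟩ := hball
  obtain ⟨ε₀, hε₀, hrigx⟩ := hrig x
  set δ := min ε ε₀ with hδdef
  have hδ : 0 < δ := lt_min hε hε₀
  have hxε : x ∈ Metric.ball x ε := Metric.mem_ball_self hε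
  have hsub : Metric.ball x δ ⊆ Metric.ball x ε := Metric.ball_subset_ball (min_le_left _ _)
  have hdist : ∀ u ∈ Metric.ball x ε, dist (h u) x = dist u x := by
    intro u hu
    have h0 := hiso u hu x hxε
    rwa [hxfix] at h0
  have hbij' : Set.BijOn h (Metric.ball x δ) (Metric.ball x δ) := by
    refine ⟨fun u hu => ?_, fun u hu v hv e => hbij.injOn (hsub hu) (hsub hv) e, fun v hv => ?_⟩
    · rw [Metric.mem_ball] at hu ⊢
      rw [hdist u (hsub (Metric.mem_ball.mpr hu))]; exact hu
    · obtain ⟨u, hu, he⟩ := hbij.surjOn (hsub hv)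
      have : dist u x = dist v x := by rw [← he]; exact (hdist u hu).symm
      exact ⟨u, Metric.mem_ball.mpr (this ▸ Metric.mem_ball.mp hv), he⟩
  obtain ⟨g, hgbij, hgiso, hgh⟩ := extend_iso ultra (min_le_right ε ε₀) hbij'
    (fun a ha b hb => hiso a (hsub ha) b (hsub hb))
  have hid : ∀ u ∈ Metric.ball x ε₀, g u = u := hrigx g hgbij hgiso
  refine ⟨δ, hδ, fun y hy => ?_⟩
  rw [← hgh y hy]
  exact hid y (Metric.ball_subset_ball (min_le_right ε ε₀) hy)
end

/-- For an ultrametric space `(X,d)` the following are equivalent: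
(1) `X` is locally rigid;
(2) every local similarity fixing a point `x` and restricting to an isometry of some
ball `B(x,ε)` onto itself is the identity near `x`;
(3) statement (2) restricted to local isometries;
(4) statement (2) restricted to bijective isometries of `X`. -/
theorem locallyRigid_tfae_actions {X : Type*} [MetricSpace X]
    (ultra : ∀ x y z : X, dist x y ≤ max (dist x z) (dist z y)) :
    (LocallyRigid X ↔
      (∀ h : X → X, IsLocalSimilarity h → ∀ x : X, h x = x →
        (∃ ε > 0, Set.BijOn h (Metric.ball x ε) (Metric.ball x ε) ∧
          ∀ a ∈ Metric.ball x ε, ∀ b ∈ Metric.ball x ε, dist (h a) (h b) = dist a b) →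
        ∃ δ > 0, ∀ y ∈ Metric.ball x δ, h y = y)) ∧
    (LocallyRigid X ↔
      (∀ h : X → X, IsLocalIsometry h → ∀ x : X, h x = x →
        (∃ ε > 0, Set.BijOn h (Metric.ball x ε) (Metric.ball x ε) ∧
          ∀ a ∈ Metric.ball x ε, ∀ b ∈ Metric.ball x ε, dist (h a) (h b) = dist a b) →
        ∃ δ > 0, ∀ y ∈ Metric.ball x δ, h y = y)) ∧
    (LocallyRigid X ↔
      (∀ h : X → X, (Function.Bijective h ∧ ∀ a b : X, dist (h a) (h b) = dist a b) →
        ∀ x : X, h x = x →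
        (∃ ε > 0, Set.BijOn h (Metric.ball x ε) (Metric.ball x ε) ∧
          ∀ a ∈ Metric.ball x ε, ∀ b ∈ Metric.ball x ε, dist (h a) (h b) = dist a b) →
        ∃ δ > 0, ∀ y ∈ Metric.ball x δ, h y = y)) := by
  have hLocSim : ∀ h : X → X, IsLocalIsometry h → IsLocalSimilarity h := by
    intro h hli
    refine ⟨hli.1, fun y => ?_⟩
    obtain ⟨ε, hε, hb, hi⟩ := hli.2 y
    exact ⟨ε, hε, 1, one_pos, by rwa [one_mul],
      fun a ha b hb' => by rw [one_mul]; exact hi a ha b hb'⟩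
  have hGlobLoc : ∀ h : X → X,
      (Function.Bijective h ∧ ∀ a b : X, dist (h a) (h b) = dist a b) →
      IsLocalIsometry h := by
    intro h hg
    refine ⟨hg.1, fun y => ⟨1, one_pos, ⟨fun u hu => ?_, fun u _ v _ e => hg.1.1 e,
      fun v hv => ?_⟩, fun a _ b _ => hg.2 a b⟩⟩
    · rw [Metric.mem_ball] at hu ⊢
      rw [hg.2 u y]; exact hu
    · obtain ⟨u, hu⟩ := hg.1.2 v
      refine ⟨u, ?_, hu⟩
      rw [Metric.mem_ball] at hv ⊢
      rw [← hg.2 u y, hu]; exact hv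
  have fwd : LocallyRigid X → ∀ h : X → X, ∀ x : X, h x = x →
      (∃ ε > 0, Set.BijOn h (Metric.ball x ε) (Metric.ball x ε) ∧
        ∀ a ∈ Metric.ball x ε, ∀ b ∈ Metric.ball x ε, dist (h a) (h b) = dist a b) →
      ∃ δ > 0, ∀ y ∈ Metric.ball x δ, h y = y := one_implies_two' ultra
  refine ⟨⟨fun hr h _ x hx d => fwd hr h x hx d,
      fun s2 => four_implies_one ultra (fun h hg => s2 h (hLocSim h (hGlobLoc h hg)))⟩,
    ⟨fun hr h _ x hx d => fwd hr h x hx d,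
      fun s3 => four_implies_one ultra (fun h hg => s3 h (hGlobLoc h hg))⟩,
    ⟨fun hr h _ x hx d => fwd hr h x hx d,
      fun s4 => four_implies_one ultra s4⟩⟩
end

section
/- A compact ultrametric space X is locally rigid if and only if the set of all bijective isometries of X onto itself is finite. -/
/-- In an ultrametric space, a point outside a ball is equidistant from all
points of the ball (and from the center). -/
lemma ultra_ball_dist {X : Type*} [MetricSpace X]
    (ultra : ∀ x y z : X, dist x y ≤ max (dist x z) (dist z y))
    {x z w : X} {ε : ℝ} (hw : dist w x < ε) (hz : ¬ dist z x < ε) :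
    dist w z = dist x z := by
  push_neg at hz
  have hzx : ε ≤ dist x z := by rwa [dist_comm]
  apply le_antisymm
  · have h1 := ultra w z x
    have h2 : dist w x ≤ dist x z := le_trans hw.le hzx
    exact h1.trans (max_le h2 le_rfl)
  · have h2 := ultra x z w
    have hxw : dist x w < ε := by rwa [dist_comm]
    rcases max_cases (dist x w) (dist w z) with ⟨heq, _⟩ | ⟨heq, _⟩ <;>
      rw [heq] at h2 <;> linarith

/-- A compact ultrametric space is locally rigid if and only if its group of
bijective self-isometries is finite. -/
theorem compact_locallyRigid_iff_isomGroup_finite {X : Type*} [MetricSpace X]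
    [CompactSpace X]
    (ultra : ∀ x y z : X, dist x y ≤ max (dist x z) (dist z y)) :
    LocallyRigid X ↔
      Set.Finite {h : X → X |
        Function.Bijective h ∧ ∀ a b : X, dist (h a) (h b) = dist a b} := by
  classical
  set S : Set (X → X) :=
    {h : X → X | Function.Bijective h ∧ ∀ a b : X, dist (h a) (h b) = dist a b}
    with hS
  constructor
  · -- locally rigid → finite isometry group
    intro hLR
    rcases isEmpty_or_nonempty X with hX | hX
    · exact Set.toFinite _
    choose ε hεpos hε using hLR
    -- finite cover by rigidity balls
    obtain ⟨t, ht⟩ := isCompact_univ.elim_finite_subcover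
      (fun x : X => Metric.ball x (ε x)) (fun x => Metric.isOpen_ball)
      (fun y _ => Set.mem_iUnion.mpr ⟨y, Metric.mem_ball_self (hεpos y)⟩)
    have htne : t.Nonempty := by
      obtain ⟨x₀⟩ := hX
      have := ht (Set.mem_univ x₀)
      simp only [Set.mem_iUnion] at this
      obtain ⟨i, hi, _⟩ := this
      exact ⟨i, hi⟩
    set δ : ℝ := t.inf' htne ε with hδ
    have hδpos : 0 < δ := by
      rw [hδ, Finset.lt_inf'_iff]
      exact fun i _ => hεpos i
    -- key: an isometry moving every point by < δ is the identity
    have keyA : ∀ g : X → X, Function.Bijective g →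
        (∀ a b, dist (g a) (g b) = dist a b) →
        (∀ y, dist (g y) y < δ) → ∀ y, g y = y := by
      intro g hb hiso hsmall y
      have hmem := ht (Set.mem_univ y)
      simp only [Set.mem_iUnion] at hmem
      obtain ⟨i, hit, hyi⟩ := hmem
      have hδi : δ ≤ ε i := Finset.inf'_le _ hit
      have hmaps : Set.MapsTo g (Metric.ball i (ε i)) (Metric.ball i (ε i)) := by
        intro z hz
        rw [Metric.mem_ball] at hz ⊢
        calc dist (g z) i ≤ max (dist (g z) z) (dist z i) := ultra _ _ _
          _ < ε i := max_lt (lt_of_lt_of_le (hsmall z) hδi) hz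
      have hsurj : Set.SurjOn g (Metric.ball i (ε i)) (Metric.ball i (ε i)) := by
        intro w hw
        obtain ⟨z, hz⟩ := hb.2 w
        refine ⟨z, ?_, hz⟩
        rw [Metric.mem_ball] at hw ⊢
        have hzz : dist z (g z) < δ := by rw [dist_comm]; exact hsmall z
        calc dist z i ≤ max (dist z (g z)) (dist (g z) i) := ultra _ _ _
          _ < ε i := max_lt (lt_of_lt_of_le hzz hδi) (by rwa [hz])
      exact hε i g ⟨hmaps, hb.1.injOn, hsurj⟩ (fun a _ b _ => hiso a b) y hyi
    -- separation: two isometries uniformly δ-close are equal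
    have sep : ∀ g g', g ∈ S → g' ∈ S →
        (∀ y, dist (g y) (g' y) < δ) → g = g' := by
      intro g g' hg hg' hsmall
      obtain ⟨hgb, hgi⟩ := hg
      obtain ⟨hg'b, hg'i⟩ := hg'
      set k := Function.invFun g' with hk
      have hrk : Function.RightInverse k g' := Function.rightInverse_invFun hg'b.2
      have hlk : Function.LeftInverse k g' := Function.leftInverse_invFun hg'b.1
      have hbij : Function.Bijective (k ∘ g) := by
        constructor
        · intro a b hab
          apply hgb.1
          have := congrArg g' hab
          simpa [Function.comp, hrk (g a), hrk (g b)] using this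
        · intro y
          obtain ⟨z, hz⟩ := hgb.2 (g' y)
          exact ⟨z, by simp [Function.comp, hz, hlk y]⟩
      have hiso : ∀ a b, dist ((k ∘ g) a) ((k ∘ g) b) = dist a b := by
        intro a b
        have h0 := hg'i (k (g a)) (k (g b))
        rw [hrk (g a), hrk (g b)] at h0
        show dist (k (g a)) (k (g b)) = dist a b
        rw [← h0]
        exact hgi a b
      have hsm : ∀ y, dist ((k ∘ g) y) y < δ := by
        intro y
        have h0 := hg'i (k (g y)) y
        rw [hrk (g y)] at h0
        show dist (k (g y)) y < δ
        rw [← h0]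
        exact hsmall y
      have hid := keyA (k ∘ g) hbij hiso hsm
      funext y
      have h1 : k (g y) = y := hid y
      have := congrArg g' h1
      rwa [hrk (g y)] at this
    -- finite net: inject S into a finite function space
    obtain ⟨s, _hss, hsfin, hscov⟩ :=
      finite_cover_balls_of_compact (isCompact_univ (X := X))
        (show (0:ℝ) < δ / 5 by linarith)
    have hnet : ∀ y : X, ∃ c ∈ s, dist y c < δ / 5 := by
      intro y
      have h0 := hscov (Set.mem_univ y)
      simp only [Set.mem_iUnion, Metric.mem_ball] at h0
      obtain ⟨c, hc, hd⟩ := h0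
      exact ⟨c, hc, hd⟩
    choose near hnear_mem hnear using hnet
    haveI : Finite ↥s := hsfin.to_subtype
    have hinj : Function.Injective
        (fun g : ↥S => (fun c : ↥s => (⟨near (g.1 c.1), hnear_mem _⟩ : ↥s))) := by
      intro g g' hgg'
      have hclose : ∀ y, dist (g.1 y) (g'.1 y) < δ := by
        intro y
        set c := near y with hcdef
        have hcs : c ∈ s := hnear_mem y
        have hyc : dist y c < δ / 5 := hnear y
        have heq : near (g.1 c) = near (g'.1 c) := by
          have := congrFun hgg' ⟨c, hcs⟩
          exact Subtype.ext_iff.mp this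
        have d1 : dist (g.1 y) (g.1 c) = dist y c := g.2.2 y c
        have d2 : dist (g'.1 c) (g'.1 y) = dist c y := g'.2.2 c y
        have d3 : dist (g.1 c) (near (g.1 c)) < δ / 5 := hnear _
        have d4 : dist (g'.1 c) (near (g'.1 c)) < δ / 5 := hnear _
        calc dist (g.1 y) (g'.1 y)
            ≤ dist (g.1 y) (g.1 c) + dist (g.1 c) (g'.1 c) + dist (g'.1 c) (g'.1 y) :=
              dist_triangle4 _ _ _ _
          _ ≤ dist y c + (dist (g.1 c) (near (g.1 c)) + dist (near (g'.1 c)) (g'.1 c))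
                + dist c y := by
              refine add_le_add (add_le_add d1.le ?_) d2.le
              rw [heq]
              exact dist_triangle _ _ _
          _ < δ / 5 + (δ / 5 + δ / 5) + δ / 5 := by
              have : dist (near (g'.1 c)) (g'.1 c) < δ / 5 := by
                rw [dist_comm]; exact d4
              have hcy : dist c y < δ / 5 := by rw [dist_comm]; exact hyc
              gcongr
          _ < δ := by linarith
      exact Subtype.ext (sep g.1 g'.1 g.2 g'.2 hclose)
    have : Finite ↥S := Finite.of_injective _ hinj
    exact Set.finite_coe_iff.mp this
  · -- finite isometry group → locally rigid
    intro hFin x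
    by_contra hcon
    push_neg at hcon
    have hcon' : ∀ n : ℕ, ∃ h : X → X,
        Set.BijOn h (Metric.ball x (1 / (n + 1))) (Metric.ball x (1 / (n + 1))) ∧
        (∀ a ∈ Metric.ball x (1 / (n + 1)), ∀ b ∈ Metric.ball x (1 / (n + 1)),
          dist (h a) (h b) = dist a b) ∧
        ∃ a ∈ Metric.ball x (1 / (n + 1)), h a ≠ a := by
      intro n
      exact hcon (1 / (n + 1)) (by positivity)
    choose h hbij hiso a ha hne using hcon'
    set B : ℕ → Set X := fun n => Metric.ball x (1 / (n + 1)) with hB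
    set g : ℕ → X → X := fun n y => if y ∈ B n then h n y else y with hg
    have hgin : ∀ n y, y ∈ B n → g n y = h n y := fun n y hy => if_pos hy
    have hgout : ∀ n y, y ∉ B n → g n y = y := fun n y hy => if_neg hy
    have hgS : ∀ n, g n ∈ S := by
      intro n
      constructor
      · constructor
        · -- injective
          intro y z hyz
          by_cases hy : y ∈ B n <;> by_cases hz : z ∈ B n
          · rw [hgin n y hy, hgin n z hz] at hyz
            exact (hbij n).injOn hy hz hyz
          · exfalso
            rw [hgin n y hy, hgout n z hz] at hyz
            exact hz (hyz ▸ (hbij n).mapsTo hy)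
          · exfalso
            rw [hgout n y hy, hgin n z hz] at hyz
            exact hy (hyz.symm ▸ (hbij n).mapsTo hz)
          · rwa [hgout n y hy, hgout n z hz] at hyz
        · -- surjective
          intro w
          by_cases hw : w ∈ B n
          · obtain ⟨z, hz, hzw⟩ := (hbij n).surjOn hw
            exact ⟨z, by rw [hgin n z hz]; exact hzw⟩
          · exact ⟨w, hgout n w hw⟩
      · -- isometry
        intro p q
        by_cases hp : p ∈ B n <;> by_cases hq : q ∈ B n
        · rw [hgin n p hp, hgin n q hq]
          exact hiso n p hp q hq
        · rw [hgin n p hp, hgout n q hq]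
          have hhp : h n p ∈ B n := (hbij n).mapsTo hp
          rw [Metric.mem_ball] at hhp hp
          rw [Metric.mem_ball, not_lt] at hq
          rw [ultra_ball_dist ultra hhp (not_lt.mpr hq),
            ← ultra_ball_dist ultra hp (not_lt.mpr hq)]
        · rw [hgout n p hp, hgin n q hq]
          have hhq : h n q ∈ B n := (hbij n).mapsTo hq
          rw [Metric.mem_ball] at hhq hq
          rw [Metric.mem_ball, not_lt] at hp
          rw [dist_comm p (h n q), dist_comm p q,
            ultra_ball_dist ultra hhq (not_lt.mpr hp),
            ← ultra_ball_dist ultra hq (not_lt.mpr hp)]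
        · rw [hgout n p hp, hgout n q hq]
    haveI : Finite ↥S := hFin.to_subtype
    obtain ⟨G, hGinf⟩ := Finite.exists_infinite_fiber (fun n : ℕ => (⟨g n, hgS n⟩ : ↥S))
    have hGinf' : ((fun n : ℕ => (⟨g n, hgS n⟩ : ↥S)) ⁻¹' {G}).Infinite :=
      Set.infinite_coe_iff.mp hGinf
    obtain ⟨n₀, hn₀⟩ := hGinf'.nonempty
    have hn₀' : g n₀ = G.1 := congrArg Subtype.val hn₀
    -- G fixes every y ≠ x
    have hfix : ∀ y : X, y ≠ x → G.1 y = y := by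
      intro y hyx
      have hdpos : 0 < dist y x := dist_pos.mpr hyx
      obtain ⟨m, hm⟩ := exists_nat_gt (1 / dist y x)
      obtain ⟨n, hn, hnm⟩ := hGinf'.exists_gt m
      have hn' : g n = G.1 := congrArg Subtype.val hn
      have hyB : y ∉ B n := by
        simp only [hB, Metric.mem_ball, not_lt]
        rw [div_le_iff₀ (by positivity)]
        rw [div_lt_iff₀ hdpos] at hm
        have : (m : ℝ) ≤ n + 1 := by exact_mod_cast Nat.le_of_lt (Nat.lt_succ_of_lt hnm)
        nlinarith
      rw [← hn']
      exact hgout n y hyB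
    -- hence G fixes x too (surjectivity), so G = id, contradiction
    have hGx : G.1 x = x := by
      obtain ⟨y, hy⟩ := G.2.1.2 x
      by_cases hyx : y = x
      · rwa [hyx] at hy
      · rw [hfix y hyx] at hy
        exact absurd hy hyx
    have hGid : ∀ y, G.1 y = y := by
      intro y
      by_cases hyx : y = x
      · rw [hyx]; exact hGx
      · exact hfix y hyx
    have hmove : G.1 (a n₀) ≠ a n₀ := by
      rw [← hn₀', hgin n₀ (a n₀) (ha n₀)]
      exact hne n₀
    exact hmove (hGid (a n₀))
end

section
/- Let X and Y be ultrametric spaces and let h : X → Y be a micro-scale equivalence. If X is locally rigid, then Y is locally rigid. -/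
/-- A bijection `h : X → Y` of metric spaces is a micro-scale equivalence if there are
a homeomorphism `ℓ` of `[0,∞)` onto itself (equivalently, a continuous strictly
increasing bijection of `[0,∞)` onto itself) and `ε > 0` such that
`ℓ (d_X x y) = d_Y (h x) (h y)` whenever `min (d_X x y) (d_Y (h x) (h y)) < ε`. -/
def MicroScaleEquivalence {X Y : Type*} [MetricSpace X] [MetricSpace Y] (h : X → Y) : Prop :=
  Function.Bijective h ∧
    ∃ ℓ : ℝ → ℝ, ContinuousOn ℓ (Set.Ici 0) ∧ Set.BijOn ℓ (Set.Ici 0) (Set.Ici 0) ∧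
      StrictMonoOn ℓ (Set.Ici 0) ∧
      ∃ ε > 0, ∀ x y : X, min (dist x y) (dist (h x) (h y)) < ε →
        ℓ (dist x y) = dist (h x) (h y)

/-!
Rigidity of a ball passes to smaller concentric balls in an ultrametric space: an isometry
of `B(x, t)` onto itself, extended by the identity, is an isometry of `B(x, r)` for `r ≥ t`,
because a point outside `B(x, t)` is at the same distance `d(v, x)` from every point of it.
Below the scale `ε`, a micro-scale equivalence `h` carries `B(x, t)` onto `B(h x, ℓ t)` and
transforms distances by the injective function `ℓ`, so conjugation by `h` turns isometries
of `B(h x, ℓ t)` into isometries of `B(x, t)`.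
-/

open Set Metric Filter Topology

section

variable {X Y : Type*} [MetricSpace X] [MetricSpace Y]

def IsRigidBall (x : X) (r : ℝ) : Prop :=
  ∀ g : X → X, BijOn g (ball x r) (ball x r) →
    (∀ a ∈ ball x r, ∀ b ∈ ball x r, dist (g a) (g b) = dist a b) → ∀ a ∈ ball x r, g a = a

theorem locallyRigid_iff : LocallyRigid X ↔ ∀ x : X, ∃ r > 0, IsRigidBall x r := Iff.rfl

theorem IsUltrametricDist.dist_eq_of_mem_ball_of_notMem_ball [IsUltrametricDist X]
    {x u v : X} {t : ℝ} (hu : u ∈ ball x t) (hv : v ∉ ball x t) : dist u v = dist v x := by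
  rw [mem_ball] at hu hv
  have hlt : dist u x < dist x v := dist_comm x v ▸ hu.trans_le (not_lt.mp hv)
  rw [dist_eq_max_of_dist_ne_dist u x v hlt.ne, max_eq_right hlt.le, dist_comm]

theorem isometry_piecewise_ball_id [IsUltrametricDist X] {x : X} {t : ℝ} {g : X → X}
    [DecidablePred (· ∈ ball x t)] (hmaps : MapsTo g (ball x t) (ball x t))
    (hiso : ∀ a ∈ ball x t, ∀ b ∈ ball x t, dist (g a) (g b) = dist a b) :
    Isometry ((ball x t).piecewise g id) := by
  have across : ∀ a ∈ ball x t, ∀ b ∉ ball x t, dist (g a) b = dist a b := fun a ha b hb => by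
    rw [IsUltrametricDist.dist_eq_of_mem_ball_of_notMem_ball (hmaps ha) hb,
      IsUltrametricDist.dist_eq_of_mem_ball_of_notMem_ball ha hb]
  refine Isometry.of_dist_eq fun a b => ?_
  by_cases ha : a ∈ ball x t <;> by_cases hb : b ∈ ball x t <;>
    simp only [piecewise_eq_of_mem, piecewise_eq_of_notMem, ha, hb, not_false_eq_true, id]
  · exact hiso a ha b hb
  · exact across a ha b hb
  · rw [dist_comm, across b hb a ha, dist_comm]

theorem IsRigidBall.mono [IsUltrametricDist X] {x : X} {r t : ℝ} (hr : IsRigidBall x r)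
    (htr : t ≤ r) : IsRigidBall x t := by
  classical
  intro g hbij hiso a ha
  set G := (ball x t).piecewise g id
  have hGiso : Isometry G := isometry_piecewise_ball_id hbij.mapsTo hiso
  have hGbij : BijOn G (ball x r) (ball x r) := by
    have inner : BijOn G (ball x t) (ball x t) := hbij.congr (piecewise_eqOn _ _ _).symm
    have outer : BijOn G (ball x r \ ball x t) (ball x r \ ball x t) :=
      (bijOn_id _).congr fun b hb => (piecewise_eq_of_notMem _ _ _ hb.2).symm
    simpa only [union_sdiff_cancel (ball_subset_ball htr)] using
      inner.union outer hGiso.injective.injOn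
  have hGa := hr G hGbij (fun a _ b _ => hGiso.dist_eq a b) a (ball_subset_ball htr ha)
  exact (piecewise_eq_of_mem _ _ _ ha).symm.trans hGa

theorem IsRigidBall.of_bijOn {h : X → Y} {ℓ : ℝ → ℝ} {x : X} {t s : ℝ} (hx : IsRigidBall x t)
    (hbij : BijOn h (ball x t) (ball (h x) s)) (hℓ : InjOn ℓ (Ici 0))
    (hdist : ∀ a ∈ ball x t, ∀ c ∈ ball x t, dist (h a) (h c) = ℓ (dist a c)) :
    IsRigidBall (h x) s := by
  have : Nonempty X := ⟨x⟩
  intro g hgbij hgiso b hb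
  set h' := Function.invFunOn h (ball x t)
  have hinv : InvOn h' h (ball x t) (ball (h x) s) := hbij.invOn_invFunOn
  set g' := h' ∘ g ∘ h
  have hg'bij : BijOn g' (ball x t) (ball x t) := (hbij.symm hinv.symm).comp (hgbij.comp hbij)
  have hg' : ∀ a ∈ ball x t, h (g' a) = g (h a) := fun a ha =>
    hinv.2 (hgbij.mapsTo (hbij.mapsTo ha))
  have hg'iso : ∀ a ∈ ball x t, ∀ c ∈ ball x t, dist (g' a) (g' c) = dist a c := by
    intro a ha c hc
    refine hℓ dist_nonneg dist_nonneg ?_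
    rw [← hdist _ (hg'bij.mapsTo ha) _ (hg'bij.mapsTo hc), hg' a ha, hg' c hc,
      hgiso _ (hbij.mapsTo ha) _ (hbij.mapsTo hc), hdist a ha c hc]
  obtain ⟨a, ha, rfl⟩ := hbij.surjOn hb
  rw [← hg' a ha, hx g' hg'bij hg'iso a ha]

theorem MonotoneOn.apply_eq_of_mapsTo_of_surjOn_Ici {α : Type*} [PartialOrder α] {f : α → α}
    {a : α} (hf : MonotoneOn f (Ici a)) (hmaps : MapsTo f (Ici a) (Ici a))
    (hsurj : SurjOn f (Ici a) (Ici a)) : f a = a := by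
  obtain ⟨b, hb, hfb⟩ := hsurj (self_mem_Ici : a ∈ Ici a)
  exact le_antisymm (hfb ▸ hf self_mem_Ici hb hb) (hmaps self_mem_Ici)

theorem exists_pos_lt_apply_lt_of_continuousWithinAt {ℓ : ℝ → ℝ}
    (hℓ : ContinuousWithinAt ℓ (Ici 0) 0) (hℓ0 : ℓ 0 = 0) {r ε : ℝ} (hr : 0 < r) (hε : 0 < ε) :
    ∃ t ∈ Ioo 0 r, ℓ t < ε := by
  have hlim : Tendsto ℓ (𝓝[>] 0) (𝓝 (ℓ 0)) := (hℓ.mono Ioi_subset_Ici_self).tendsto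
  rw [hℓ0] at hlim
  exact (Eventually.and (Ioo_mem_nhdsGT hr) (hlim.eventually (gt_mem_nhds hε))).exists

variable {h : X → Y} {ℓ : ℝ → ℝ} {ε t : ℝ}

theorem bijOn_ball_of_dist_eq (hh : Function.Bijective h) (hℓ : StrictMonoOn ℓ (Ici 0))
    (hrel : ∀ a b, min (dist a b) (dist (h a) (h b)) < ε → ℓ (dist a b) = dist (h a) (h b))
    (x : X) (ht : 0 ≤ t) (htε : t ≤ ε) (hℓt : ℓ t ≤ ε) :
    BijOn h (ball x t) (ball (h x) (ℓ t)) := by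
  convert hh.bijOn_preimage using 1
  ext a
  simp only [mem_ball, mem_preimage]
  constructor
  · intro ha
    rw [← hrel a x ((min_le_left _ _).trans_lt (ha.trans_le htε))]
    exact hℓ dist_nonneg ht ha
  · intro ha
    rw [← hrel a x ((min_le_right _ _).trans_lt (ha.trans_le hℓt))] at ha
    exact (hℓ.lt_iff_lt dist_nonneg ht).mp ha

theorem dist_apply_eq_of_mem_ball [IsUltrametricDist X]
    (hrel : ∀ a b, min (dist a b) (dist (h a) (h b)) < ε → ℓ (dist a b) = dist (h a) (h b))
    {x a c : X} (htε : t ≤ ε) (ha : a ∈ ball x t) (hc : c ∈ ball x t) :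
    dist (h a) (h c) = ℓ (dist a c) := by
  have hac : dist a c < t := by
    rw [IsUltrametricDist.ball_eq_of_mem hc] at ha
    exact ha
  exact (hrel a c ((min_le_left _ _).trans_lt (hac.trans_le htε))).symm

end

theorem locallyRigid_of_microScaleEquivalence_general
    {X Y : Type*} [MetricSpace X] [MetricSpace Y]
    (ultraX : ∀ x y z : X, dist x y ≤ max (dist x z) (dist z y))
    (h : X → Y) (hmse : MicroScaleEquivalence h)
    (hX : LocallyRigid X) :
    LocallyRigid Y := by
  have : IsUltrametricDist X := ⟨fun a b c => ultraX a c b⟩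
  obtain ⟨hh, ℓ, hcont, hℓbij, hℓ, ε, hε, hrel⟩ := hmse
  have hℓ0 : ℓ 0 = 0 := hℓ.monotoneOn.apply_eq_of_mapsTo_of_surjOn_Ici hℓbij.mapsTo hℓbij.surjOn
  rw [locallyRigid_iff] at hX ⊢
  intro y
  obtain ⟨x, rfl⟩ := hh.2 y
  obtain ⟨r, hr, hrigid⟩ := hX x
  obtain ⟨t, ⟨ht, htrε⟩, hℓt⟩ :=
    exists_pos_lt_apply_lt_of_continuousWithinAt (hcont 0 self_mem_Ici) hℓ0 (lt_min hr hε) hε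
  have htε : t ≤ ε := htrε.le.trans (min_le_right _ _)
  refine ⟨ℓ t, hℓ0 ▸ hℓ self_mem_Ici ht.le ht, ?_⟩
  exact (hrigid.mono (htrε.le.trans (min_le_left _ _))).of_bijOn
    (bijOn_ball_of_dist_eq hh hℓ hrel x ht.le htε hℓt.le) hℓbij.injOn
    fun a ha c hc => dist_apply_eq_of_mem_ball hrel htε ha hc

/-- If `X` and `Y` are micro-scale equivalent ultrametric spaces and `X` is locally
rigid, then `Y` is locally rigid. -/
theorem locallyRigid_of_microScaleEquivalence
    {X Y : Type*} [MetricSpace X] [MetricSpace Y]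
    (ultraX : ∀ x y z : X, dist x y ≤ max (dist x z) (dist z y))
    (ultraY : ∀ x y z : Y, dist x y ≤ max (dist x z) (dist z y))
    (h : X → Y) (hmse : MicroScaleEquivalence h)
    (hX : LocallyRigid X) :
    LocallyRigid Y :=
  locallyRigid_of_microScaleEquivalence_general ultraX h hmse hX
end

section
/- If (X,d) is a compact ultrametric space with at least two points, then there exists a homeomorphism λ : [0,∞) → [0,∞) such that d' = λ∘d is an ultrametric on X inducing the same topology as d, every nonzero value of d' belongs to {e^{-i} : i = 0, 1, 2, …}, and the value 1 = e^0 is attained by d' (so (X,d') has diameter 1). -/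
/-!
By compactness, `X` is covered by finitely many `ε`-balls, and since all triangles are isosceles
every distance `≥ ε` is the distance between two of their centres. So the positive distances
form a set `S` with finitely many elements above each `ε > 0`. Padded with a sequence tending
to `0` (so that the list is infinite even when `S` is finite), this set is listed decreasingly
as `r₀ > r₁ > ⋯ → 0`, with `r₀` the diameter, and the piecewise-linear map sending `rᵢ` to
`e^{-i}` (with slope `1` beyond `r₀`) is the rescaling. Being increasing, it preserves the
ultrametric inequality and the topology. It is written as a uniformly convergent sum of clamped
linear ramps, one per interval `[rᵢ₊₁, rᵢ]`, which makes its continuity immediate.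
-/

open Set Filter Topology Function

theorem exists_apply_succ_lt_le {α : Type*} [LinearOrder α] {r : ℕ → α} {x : α}
    (h₀ : x ≤ r 0) (h : ∃ j, r j < x) : ∃ m, r (m + 1) < x ∧ x ≤ r m := by
  classical
  obtain ⟨m, hm⟩ : ∃ m, Nat.find h = m + 1 :=
    Nat.exists_eq_add_one.2 (Nat.pos_of_ne_zero fun h0 => (Nat.find_spec h).not_ge (h0 ▸ h₀))
  exact ⟨m, hm ▸ Nat.find_spec h, not_lt.1 (Nat.find_min h (hm ▸ m.lt_succ_self))⟩

theorem finite_range_inter_Ici_of_tendsto {u : ℕ → ℝ} (hu : Tendsto u atTop (𝓝 0)) {ε : ℝ}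
    (hε : 0 < ε) : (range u ∩ Ici ε).Finite := by
  have hfin : {n | ε ≤ u n}.Finite := by
    simpa [← Nat.cofinite_eq_atTop] using hu.eventually (gt_mem_nhds hε)
  exact (hfin.image u).subset <| by rintro _ ⟨⟨n, rfl⟩, hle⟩; exact ⟨n, hle, rfl⟩

section Enumeration

variable {T : Set ℝ} {r₀ : ℝ} (hpos : T ⊆ Ioi 0) (hfin : ∀ ε > 0, (T ∩ Ici ε).Finite)

include hpos hfin in
theorem isGreatest_sSup_inter_Iio {c : ℝ} (hne : (T ∩ Iio c).Nonempty) :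
    IsGreatest (T ∩ Iio c) (sSup (T ∩ Iio c)) := by
  obtain ⟨s, hsT, hsc⟩ := hne
  have hfin' : (T ∩ Ico s c).Finite :=
    (hfin s (hpos hsT)).subset fun t ht => ⟨ht.1, ht.2.1⟩
  obtain ⟨m, ⟨hmT, -, hmc⟩, hmax⟩ := exists_max_image _ id hfin' ⟨s, hsT, le_rfl, hsc⟩
  have hm : IsGreatest (T ∩ Iio c) m := by
    refine ⟨⟨hmT, hmc⟩, fun t ⟨htT, htc⟩ => ?_⟩
    rcases le_or_gt s t with hst | hts
    · exact hmax t ⟨htT, hst, htc⟩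
    · exact hts.le.trans (hmax s ⟨hsT, le_rfl, hsc⟩)
  rwa [hm.csSup_eq]

noncomputable def descendingEnum (T : Set ℝ) (r₀ : ℝ) : ℕ → ℝ
  | 0 => r₀
  | i + 1 => sSup (T ∩ Iio (descendingEnum T r₀ i))

variable (hsmall : ∀ c > 0, (T ∩ Iio c).Nonempty)

include hpos hfin hsmall in
theorem descendingEnum_mem (hr₀ : r₀ ∈ T) : ∀ i, descendingEnum T r₀ i ∈ T
  | 0 => hr₀
  | i + 1 => (isGreatest_sSup_inter_Iio hpos hfin
      (hsmall _ (hpos (descendingEnum_mem hr₀ i)))).1.1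

include hpos hfin hsmall in
theorem isGreatest_descendingEnum_succ (hr₀ : r₀ ∈ T) (i : ℕ) :
    IsGreatest (T ∩ Iio (descendingEnum T r₀ i)) (descendingEnum T r₀ (i + 1)) :=
  isGreatest_sSup_inter_Iio hpos hfin
    (hsmall _ (hpos (descendingEnum_mem hpos hfin hsmall hr₀ i)))

include hpos hfin hsmall in
theorem strictAnti_descendingEnum (hr₀ : r₀ ∈ T) : StrictAnti (descendingEnum T r₀) :=
  strictAnti_nat_of_succ_lt fun i => (isGreatest_descendingEnum_succ hpos hfin hsmall hr₀ i).1.2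

include hpos hfin hsmall in
theorem exists_descendingEnum_lt (hr₀ : r₀ ∈ T) {c : ℝ} (hc : 0 < c) :
    ∃ j, descendingEnum T r₀ j < c := by
  by_contra! h
  exact infinite_of_injective_forall_mem (s := T ∩ Ici c)
    (strictAnti_descendingEnum hpos hfin hsmall hr₀).injective
    (fun j => ⟨descendingEnum_mem hpos hfin hsmall hr₀ j, h j⟩) (hfin c hc)

include hpos hfin hsmall in
theorem subset_range_descendingEnum (hr₀ : IsGreatest T r₀) : T ⊆ range (descendingEnum T r₀) := by
  intro s hs
  obtain ⟨m, hlt, hle⟩ := exists_apply_succ_lt_le (hr₀.2 hs)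
    (exists_descendingEnum_lt hpos hfin hsmall hr₀.1 (hpos hs))
  refine ⟨m, le_antisymm (not_lt.1 fun hsm => hlt.not_ge ?_) hle⟩
  exact (isGreatest_descendingEnum_succ hpos hfin hsmall hr₀.1 m).2 ⟨hs, hsm⟩

end Enumeration

theorem hasSum_sub_succ {a : ℕ → ℝ} (ha : Antitone a) (h : Tendsto a atTop (𝓝 0)) :
    HasSum (fun m => a m - a (m + 1)) (a 0) := by
  refine (hasSum_iff_tendsto_nat_of_nonneg (fun m => sub_nonneg.2 (ha m.le_succ)) _).2 ?_
  simp_rw [Finset.sum_range_sub']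
  simpa using tendsto_const_nhds.sub h

section Interpolation

variable {r a : ℕ → ℝ}

noncomputable def ramp (r a : ℕ → ℝ) (m : ℕ) (t : ℝ) : ℝ :=
  (a m - a (m + 1)) / (r m - r (m + 1)) * (min (max t (r (m + 1))) (r m) - r (m + 1))

noncomputable def interp (r a : ℕ → ℝ) (t : ℝ) : ℝ :=
  max (t - r 0) 0 + ∑' m, ramp r a m t

theorem continuous_ramp (m : ℕ) : Continuous (ramp r a m) := by
  unfold ramp; fun_prop

variable (hr : StrictAnti r) (ha : StrictAnti a)

include hr ha in
theorem ramp_slope_pos (m : ℕ) : 0 < (a m - a (m + 1)) / (r m - r (m + 1)) :=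
  div_pos (sub_pos.2 (ha m.lt_succ_self)) (sub_pos.2 (hr m.lt_succ_self))

include hr ha in
theorem monotone_ramp (m : ℕ) : Monotone (ramp r a m) := fun s t hst =>
  mul_le_mul_of_nonneg_left (by gcongr) (ramp_slope_pos hr ha m).le

include hr in
theorem ramp_of_le {m : ℕ} {t : ℝ} (ht : t ≤ r (m + 1)) : ramp r a m t = 0 := by
  simp [ramp, max_eq_right ht, min_eq_left (hr.antitone m.le_succ)]

include hr in
theorem ramp_of_ge {m : ℕ} {t : ℝ} (ht : r m ≤ t) : ramp r a m t = a m - a (m + 1) := by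
  have hlt := hr m.lt_succ_self
  rw [ramp, max_eq_left (hlt.le.trans ht), min_eq_right ht, div_mul_cancel₀ _ (sub_pos.2 hlt).ne']

include hr ha in
theorem ramp_nonneg (m : ℕ) (t : ℝ) : 0 ≤ ramp r a m t :=
  mul_nonneg (ramp_slope_pos hr ha m).le
    (sub_nonneg.2 (le_min (le_max_right _ _) (hr.antitone m.le_succ)))

include hr ha in
theorem ramp_le (m : ℕ) (t : ℝ) : ramp r a m t ≤ a m - a (m + 1) :=
  (monotone_ramp hr ha m (le_max_left t (r m))).trans_eq (ramp_of_ge hr (le_max_right _ _))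

include hr ha in
theorem ramp_lt_ramp {m : ℕ} {s t : ℝ} (hs : s < r m) (ht : r (m + 1) < t) (hst : s < t) :
    ramp r a m s < ramp r a m t := by
  refine mul_lt_mul_of_pos_left (sub_lt_sub_right ?_ _) (ramp_slope_pos hr ha m)
  calc min (max s (r (m + 1))) (r m) ≤ max s (r (m + 1)) := min_le_left _ _
    _ < min t (r m) := max_lt (lt_min hst hs) (lt_min ht (hr m.lt_succ_self))
    _ ≤ min (max t (r (m + 1))) (r m) := by gcongr; exact le_max_left _ _

variable (ha₀ : Tendsto a atTop (𝓝 0))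

include hr ha ha₀ in
theorem summable_ramp (t : ℝ) : Summable (ramp r a · t) :=
  .of_nonneg_of_le (ramp_nonneg hr ha · t) (ramp_le hr ha · t)
    (hasSum_sub_succ ha.antitone ha₀).summable

include hr ha ha₀ in
theorem continuous_interp : Continuous (interp r a) :=
  ((continuous_sub_right _).max continuous_const).add <|
    continuous_tsum continuous_ramp (hasSum_sub_succ ha.antitone ha₀).summable fun m t => by
      rw [Real.norm_of_nonneg (ramp_nonneg hr ha m t)]; exact ramp_le hr ha m t

include hr in
theorem interp_zero (hr₀ : ∀ i, 0 < r i) : interp r a 0 = 0 := by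
  simp [interp, ramp_of_le hr (hr₀ _).le, (hr₀ 0).le]

include hr ha ha₀ in
theorem interp_apply (i : ℕ) : interp r a (r i) = a i := by
  have hsum : HasSum (ramp r a · (r i)) (a i) := by
    rw [← hasSum_nat_add_iff' i, Finset.sum_eq_zero fun m hm =>
      ramp_of_le hr (hr.antitone (Finset.mem_range.1 hm)), sub_zero]
    simp_rw [ramp_of_ge hr (hr.antitone (Nat.le_add_left i _))]
    simpa only [zero_add, add_right_comm _ 1 i] using
      hasSum_sub_succ (fun m n h => ha.antitone (by omega)) (ha₀.comp (tendsto_add_atTop_nat i))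
  simp [interp, hsum.tsum_eq, hr.antitone (Nat.zero_le i)]

variable (hr₀ : ∀ i, 0 < r i) (hsmall : ∀ c > 0, ∃ j, r j < c)

include hr ha ha₀ hr₀ hsmall in
theorem strictMonoOn_interp : StrictMonoOn (interp r a) (Ici 0) := by
  intro s hs t ht hst
  have hle : ∀ m, ramp r a m s ≤ ramp r a m t := fun m => monotone_ramp hr ha m hst.le
  rcases le_or_gt (r 0) s with hs₀ | hs₀
  · refine add_lt_add_of_lt_of_le ?_ ((summable_ramp hr ha ha₀ s).tsum_le_tsum hle
      (summable_ramp hr ha ha₀ t))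
    rw [max_eq_left (sub_nonneg.2 hs₀), max_eq_left (sub_nonneg.2 (hs₀.trans hst.le))]
    linarith
  · obtain ⟨m, hm₁, hm⟩ := exists_apply_succ_lt_le (min_le_right t (r 0))
      (hsmall _ (lt_min (lt_of_le_of_lt hs hst) (hr₀ 0)))
    refine add_lt_add_of_le_of_lt (by gcongr) ((summable_ramp hr ha ha₀ s).tsum_lt_tsum hle
      (ramp_lt_ramp hr ha (lt_min hst hs₀ |>.trans_le hm) (hm₁.trans_le (min_le_left _ _)) hst)
      (summable_ramp hr ha ha₀ t))

include hr ha ha₀ hr₀ hsmall in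
theorem bijOn_interp : BijOn (interp r a) (Ici 0) (Ici 0) := by
  have hmono := (strictMonoOn_interp hr ha ha₀ hr₀ hsmall).monotoneOn
  refine ⟨fun t ht => interp_zero hr hr₀ ▸ hmono self_mem_Ici ht ht,
    (strictMonoOn_interp hr ha ha₀ hr₀ hsmall).injOn, fun y hy => ?_⟩
  have hy' : y ≤ interp r a (y + r 0) := by
    have : 0 ≤ ∑' m, ramp r a m (y + r 0) := tsum_nonneg (ramp_nonneg hr ha · _)
    simp only [interp, add_sub_cancel_right, max_eq_left (show (0 : ℝ) ≤ y from hy)]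
    linarith
  obtain ⟨t, ⟨ht, -⟩, hty⟩ := intermediate_value_Icc (by linarith [hr₀ 0, mem_Ici.1 hy])
    (continuous_interp hr ha ha₀).continuousOn ⟨(interp_zero hr hr₀).trans_le hy, hy'⟩
  exact ⟨t, ht, hty⟩

end Interpolation

theorem exists_superset_inter_Iio_nonempty {S : Set ℝ} {r₀ : ℝ} (hS : S ⊆ Ioi 0)
    (hfin : ∀ ε > 0, (S ∩ Ici ε).Finite) (hr₀ : IsGreatest S r₀) :
    ∃ T, S ⊆ T ∧ T ⊆ Ioi 0 ∧ (∀ ε > 0, (T ∩ Ici ε).Finite) ∧ (∀ c > 0, (T ∩ Iio c).Nonempty) ∧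
      IsGreatest T r₀ := by
  set u : ℕ → ℝ := fun n => r₀ / (n + 1)
  have hr₀pos : 0 < r₀ := hS hr₀.1
  have hu : Tendsto u atTop (𝓝 0) := by
    simpa [u, comp_def] using
      (tendsto_const_div_atTop_nhds_zero_nat r₀).comp (tendsto_add_atTop_nat 1)
  refine ⟨S ∪ range u, subset_union_left, union_subset hS ?_, fun ε hε => ?_, fun c hc => ?_,
    ⟨Or.inl hr₀.1, union_subset_iff.2 ⟨hr₀.2, ?_⟩⟩⟩
  · rintro _ ⟨n, rfl⟩
    exact div_pos hr₀pos n.cast_add_one_pos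
  · rw [union_inter_distrib_right]
    exact (hfin ε hε).union (finite_range_inter_Ici_of_tendsto hu hε)
  · obtain ⟨n, hn⟩ := (hu.eventually (gt_mem_nhds hc)).exists
    exact ⟨u n, Or.inr ⟨n, rfl⟩, hn⟩
  · rintro _ ⟨n, rfl⟩
    exact div_le_self hr₀pos.le (le_add_of_nonneg_left n.cast_nonneg)

theorem exists_rescaling_into_exp_neg_nat {S : Set ℝ} {r₀ : ℝ} (hS : S ⊆ Ioi 0)
    (hfin : ∀ ε > 0, (S ∩ Ici ε).Finite) (hr₀ : IsGreatest S r₀) :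
    ∃ ℓ : ℝ → ℝ, Continuous ℓ ∧ BijOn ℓ (Ici 0) (Ici 0) ∧ StrictMonoOn ℓ (Ici 0) ∧ ℓ 0 = 0 ∧
      (∀ s ∈ S, ∃ i : ℕ, ℓ s = Real.exp (-(i : ℝ))) ∧ ℓ r₀ = 1 := by
  obtain ⟨T, hST, hTpos, hTfin, hTsmall, hT⟩ := exists_superset_inter_Iio_nonempty hS hfin hr₀
  set r := descendingEnum T r₀
  have hr := strictAnti_descendingEnum hTpos hTfin hTsmall hT.1
  have hrpos : ∀ i, 0 < r i := fun i => hTpos (descendingEnum_mem hTpos hTfin hTsmall hT.1 i)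
  have hrsmall := fun c => exists_descendingEnum_lt hTpos hTfin hTsmall hT.1 (c := c)
  set a : ℕ → ℝ := fun i => Real.exp (-(i : ℝ))
  have ha : StrictAnti a := fun i j h => Real.exp_lt_exp.2 (by simpa using h)
  have ha₀ : Tendsto a atTop (𝓝 0) :=
    Real.tendsto_exp_neg_atTop_nhds_zero.comp tendsto_natCast_atTop_atTop
  refine ⟨interp r a, continuous_interp hr ha ha₀, bijOn_interp hr ha ha₀ hrpos hrsmall,
    strictMonoOn_interp hr ha ha₀ hrpos hrsmall, interp_zero hr hrpos, fun s hs => ?_, ?_⟩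
  · obtain ⟨i, rfl⟩ := subset_range_descendingEnum hTpos hTfin hTsmall hT (hST hs)
    exact ⟨i, interp_apply hr ha ha₀ i⟩
  · exact (interp_apply hr ha ha₀ 0).trans (by simp [a])

theorem IsUltrametricDist.dist_eq_of_dist_lt {X : Type*} [PseudoMetricSpace X]
    [IsUltrametricDist X] {x y z : X} (h : dist x y < dist y z) : dist x z = dist y z :=
  (dist_eq_max_of_dist_ne_dist x y z h.ne).trans (max_eq_right h.le)

theorem IsUltrametricDist.finite_range_dist_inter_Ici {X : Type*} [PseudoMetricSpace X]
    [IsUltrametricDist X] [CompactSpace X] {ε : ℝ} (hε : 0 < ε) :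
    (range (uncurry (dist : X → X → ℝ)) ∩ Ici ε).Finite := by
  obtain ⟨t, -, ht, hcover⟩ := finite_cover_balls_of_compact (isCompact_univ (X := X)) hε
  refine ((ht.prod ht).image (uncurry dist)).subset ?_
  rintro _ ⟨⟨⟨x, y⟩, rfl⟩, hxy⟩
  obtain ⟨p, hp, hxp⟩ := mem_iUnion₂.1 (hcover (mem_univ x))
  obtain ⟨q, hq, hyq⟩ := mem_iUnion₂.1 (hcover (mem_univ y))
  rw [Metric.mem_ball] at hxp hyq
  have hpy : dist p y = dist x y :=
    dist_eq_of_dist_lt (by rw [dist_comm]; exact hxp.trans_le hxy)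
  have hqp : dist q p = dist y p :=
    dist_eq_of_dist_lt (by rw [dist_comm q y, dist_comm y p, hpy]; exact hyq.trans_le hxy)
  exact ⟨(p, q), ⟨hp, hq⟩, by simp only [uncurry_apply_pair]; rw [dist_comm, hqp, dist_comm, hpy]⟩

theorem exists_pos_forall_lt_of_map_lt {ℓ : ℝ → ℝ} (hℓ : StrictMonoOn ℓ (Ici 0)) (h₀ : ℓ 0 = 0)
    {ε : ℝ} (hε : 0 < ε) : ∃ δ > 0, ∀ t, 0 ≤ t → ℓ t < δ → t < ε :=
  ⟨ℓ ε, h₀ ▸ hℓ self_mem_Ici hε.le hε, fun _ ht h => (hℓ.lt_iff_lt ht hε.le).1 h⟩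

theorem exists_pos_forall_map_lt {ℓ : ℝ → ℝ} (hℓ : ContinuousWithinAt ℓ (Ici 0) 0)
    (h₀ : ℓ 0 = 0) {ε : ℝ} (hε : 0 < ε) : ∃ δ > 0, ∀ t, 0 ≤ t → t < δ → ℓ t < ε := by
  obtain ⟨δ, hδ, h⟩ := Metric.continuousWithinAt_iff.1 hℓ ε hε
  refine ⟨δ, hδ, fun t ht htδ => ?_⟩
  have := h (mem_Ici.2 ht) (by rwa [Real.dist_0_eq_abs, abs_of_nonneg ht])
  rw [h₀, Real.dist_0_eq_abs] at this
  exact (le_abs_self _).trans_lt this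

/-- If `(X,d)` is a compact ultrametric space with at least two points, then there is a
homeomorphism `ℓ` of `[0,∞)` onto itself (equivalently, a continuous strictly increasing
bijection of `[0,∞)` onto itself) such that `d' = ℓ ∘ d` is an ultrametric on `X`
inducing the same topology as `d`, every nonzero value of `d'` is of the form `e^{-i}`
for a natural number `i`, and the value `1 = e^0` is attained by `d'`. -/
theorem exists_scaling_to_standard_distance_set {X : Type*} [MetricSpace X]
    [CompactSpace X]
    (ultra : ∀ x y z : X, dist x y ≤ max (dist x z) (dist z y))
    (x₀ y₀ : X) (hxy : x₀ ≠ y₀) :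
    ∃ ℓ : ℝ → ℝ, ContinuousOn ℓ (Set.Ici 0) ∧ Set.BijOn ℓ (Set.Ici 0) (Set.Ici 0) ∧
      StrictMonoOn ℓ (Set.Ici 0) ∧
      (∀ a b c : X, ℓ (dist a b) ≤ max (ℓ (dist a c)) (ℓ (dist c b))) ∧
      (∀ a b : X, ℓ (dist a b) = 0 ↔ a = b) ∧
      (∀ (x : X) (ε : ℝ), 0 < ε → ∃ δ > 0, ∀ y : X, ℓ (dist x y) < δ → dist x y < ε) ∧
      (∀ (x : X) (ε : ℝ), 0 < ε → ∃ δ > 0, ∀ y : X, dist x y < δ → ℓ (dist x y) < ε) ∧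
      (∀ a b : X, a ≠ b → ∃ i : ℕ, ℓ (dist a b) = Real.exp (-(i : ℝ))) ∧
      (∃ a b : X, ℓ (dist a b) = 1) := by
  have : IsUltrametricDist X := ⟨fun x y z => ultra x z y⟩
  obtain ⟨⟨a₀, b₀⟩, -, hmax⟩ := isCompact_univ.exists_isMaxOn ⟨(x₀, y₀), mem_univ _⟩
    (continuous_dist (α := X)).continuousOn
  have hr₀ : IsGreatest (range (uncurry (dist : X → X → ℝ)) ∩ Ioi 0) (dist a₀ b₀) :=
    ⟨⟨⟨(a₀, b₀), rfl⟩, (dist_pos.2 hxy).trans_le (hmax (mem_univ (x₀, y₀)))⟩,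
      fun _ ⟨⟨p, hp⟩, _⟩ => hp ▸ hmax (mem_univ p)⟩
  obtain ⟨ℓ, hcont, hbij, hmono, h₀, hvals, hone⟩ := exists_rescaling_into_exp_neg_nat
    inter_subset_right (fun ε hε => (IsUltrametricDist.finite_range_dist_inter_Ici hε).subset
      (inter_subset_inter_left _ inter_subset_left)) hr₀
  refine ⟨ℓ, hcont.continuousOn, hbij, hmono, fun a b c => ?_, fun a b => ?_, fun x ε hε => ?_,
    fun x ε hε => ?_, fun a b hab => hvals _ ⟨⟨(a, b), rfl⟩, dist_pos.2 hab⟩, a₀, b₀, hone⟩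
  · rw [← hmono.monotoneOn.map_max dist_nonneg dist_nonneg]
    exact hmono.monotoneOn dist_nonneg (le_max_of_le_left dist_nonneg) (ultra a b c)
  · rw [← h₀, hbij.injOn.eq_iff dist_nonneg self_mem_Ici, dist_eq_zero]
  · obtain ⟨δ, hδ, h⟩ := exists_pos_forall_lt_of_map_lt hmono h₀ hε
    exact ⟨δ, hδ, fun y => h _ dist_nonneg⟩
  · obtain ⟨δ, hδ, h⟩ := exists_pos_forall_map_lt hcont.continuousWithinAt h₀ hε
    exact ⟨δ, hδ, fun y => h _ dist_nonneg⟩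
end

section
/- Let X = {x : ℕ → {0,1} : x_i = 1 implies x_{i+1} = 0 for all i} (the Fibonacci space), equipped with the ultrametric d(x,y) = e^{-k} for x ≠ y, where k = min{i : x_i ≠ y_i}, and d(x,x) = 0. Then X is locally rigid: for every x ∈ X there exists ε > 0 such that every isometry of the open ball B(x,ε) onto itself is the identity. -/
open Classical in
/-- The standard ultrametric on spaces of sequences: `d(x,y) = e^{-k}` where `k` is the
first coordinate at which `x` and `y` differ, and `d(x,x) = 0`. -/
noncomputable def seqDist {α : Type*} (x y : ℕ → α) : ℝ :=
  if h : x = y then 0 else Real.exp (-(Nat.find (Function.ne_iff.mp h) : ℝ))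

/-- The Fibonacci space: sequences of `0`s and `1`s in which every `1` is followed
by a `0`. -/
def FibonacciSpace : Set (ℕ → Fin 2) :=
  {x | ∀ i : ℕ, x i = 1 → x (i + 1) = 0}

open Classical in
lemma seqDist_lt_two {α : Type*} (x y : ℕ → α) : seqDist x y < 2 := by
  rcases eq_or_ne x y with rfl | h
  · simp only [seqDist, dif_pos]; norm_num
  · simp only [seqDist, dif_neg h]
    calc Real.exp (-(Nat.find (Function.ne_iff.mp h) : ℝ))
        ≤ Real.exp 0 := Real.exp_le_exp.mpr (neg_nonpos.mpr (Nat.cast_nonneg _))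
      _ < 2 := by rw [Real.exp_zero]; norm_num

open Classical in
lemma seqDist_eq_exp {α : Type*} {a b : ℕ → α} {n : ℕ} (hn : a n ≠ b n)
    (hlt : ∀ i < n, a i = b i) : seqDist a b = Real.exp (-(n : ℝ)) := by
  have hab : a ≠ b := fun h => hn (by rw [h])
  simp only [seqDist, dif_neg hab]
  have : Nat.find (Function.ne_iff.mp hab) = n := by
    rw [Nat.find_eq_iff]
    exact ⟨hn, fun m hm => not_not_intro (hlt m hm)⟩
  rw [this]

open Classical in
lemma exp_eq_seqDist {α : Type*} {a b : ℕ → α} {n : ℕ}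
    (h : seqDist a b = Real.exp (-(n : ℝ))) : a n ≠ b n ∧ ∀ i < n, a i = b i := by
  have hab : a ≠ b := by
    rintro rfl
    rw [seqDist, dif_pos rfl] at h
    exact (Real.exp_pos _).ne' h.symm
  rw [seqDist, dif_neg hab] at h
  have hfind : Nat.find (Function.ne_iff.mp hab) = n := by
    have h2 := Real.exp_eq_exp.mp h
    have h3 : (Nat.find (Function.ne_iff.mp hab) : ℝ) = n := by linarith
    exact_mod_cast h3
  rw [Nat.find_eq_iff] at hfind
  exact ⟨hfind.1, fun i hi => not_not.mp (hfind.2 i hi)⟩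

lemma fin2_cases (v : Fin 2) : v = 0 ∨ v = 1 := by omega

lemma fib_rigid (h : (ℕ → Fin 2) → (ℕ → Fin 2))
    (hmaps : Set.MapsTo h FibonacciSpace FibonacciSpace)
    (hiso : ∀ a ∈ FibonacciSpace, ∀ b ∈ FibonacciSpace,
      seqDist (h a) (h b) = seqDist a b) :
    ∀ a ∈ FibonacciSpace, h a = a := by
  suffices key : ∀ n : ℕ, ∀ a ∈ FibonacciSpace, h a n = a n by
    intro a ha; funext n; exact key n a ha
  intro n
  induction n using Nat.strong_induction_on with
  | _ n ih =>
    -- Lemma A : points with a n = 1 keep value 1 at n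
    have hA : ∀ a ∈ FibonacciSpace, a n = 1 → h a n = 1 := by
      intro a ha h1
      by_contra h0'
      have h0 : h a n = 0 := (fin2_cases _).resolve_right h0'
      -- b : a's prefix, 0 at n, 1 at n+1, 0 after
      set b : ℕ → Fin 2 := fun i => if i = n + 1 then 1 else if n ≤ i then 0 else a i with hbdef
      set c : ℕ → Fin 2 := fun i => if n ≤ i then 0 else a i with hcdef
      have hbX : b ∈ FibonacciSpace := by
        intro i hbi
        simp only [hbdef] at hbi ⊢
        split at hbi
        · rename_i hi; subst hi
          simp only [if_neg (by omega : ¬ n + 1 + 1 = n + 1), if_pos (by omega : n ≤ n + 1 + 1)]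
        · split at hbi
          · exact absurd hbi (by simp)
          · rename_i _ hlt
            push_neg at hlt
            rcases lt_or_ge (i+1) n with hc1 | hc2
            · rw [if_neg (by omega), if_neg (by omega)]
              exact ha i hbi
            · -- i + 1 = n, since i < n
              have : i + 1 = n := by omega
              rw [if_neg (by omega), if_pos (by omega)]
      have hcX : c ∈ FibonacciSpace := by
        intro i hci
        simp only [hcdef] at hci ⊢
        split at hci
        · exact absurd hci (by simp)
        · rename_i hlt
          push_neg at hlt
          rcases lt_or_ge (i+1) n with hc1 | hc2
          · rw [if_neg (by omega)]; exact ha i hci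
          · rw [if_pos (by omega)]
      have hbn : b n = 0 := by simp [hbdef]
      have hcn : c n = 0 := by simp [hcdef]
      have hab : seqDist a b = Real.exp (-(n:ℝ)) :=
        seqDist_eq_exp (by rw [h1, hbn]; decide) (fun i hi => by simp [hbdef, if_neg (by omega : ¬ i = n+1), if_neg (by omega : ¬ n ≤ i)])
      have hac : seqDist a c = Real.exp (-(n:ℝ)) :=
        seqDist_eq_exp (by rw [h1, hcn]; decide) (fun i hi => by simp [hcdef, if_neg (by omega : ¬ n ≤ i)])
      have hbc : seqDist b c = Real.exp (-((n+1 : ℕ):ℝ)) := by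
        apply seqDist_eq_exp
        · simp [hbdef, hcdef]
        · intro i hi
          rcases eq_or_lt_of_le (Nat.lt_succ_iff.mp hi) with hin | hin
          · subst hin; rw [hbn, hcn]
          · simp [hbdef, hcdef, if_neg (by omega : ¬ i = n+1), if_neg (by omega : ¬ n ≤ i)]
      -- images
      have hhb := exp_eq_seqDist ((hiso a ha b hbX).trans hab)
      have hhc := exp_eq_seqDist ((hiso a ha c hcX).trans hac)
      have hhbn : h b n = 1 := by
        rcases fin2_cases (h b n) with h' | h'
        · exact absurd (h0.trans h'.symm) hhb.1
        · exact h'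
      have hhcn : h c n = 1 := by
        rcases fin2_cases (h c n) with h' | h'
        · exact absurd (h0.trans h'.symm) hhc.1
        · exact h'
      have hhbc := exp_eq_seqDist ((hiso b hbX c hcX).trans hbc)
      exact hhbc.1 ((hmaps hbX n hhbn).trans (hmaps hcX n hhcn).symm)
    intro a ha
    rcases fin2_cases (a n) with h0 | h1
    · -- a n = 0
      by_contra h1'
      have hha1 : h a n = 1 := by
        rcases fin2_cases (h a n) with h' | h'
        · exact absurd (h'.trans h0.symm) h1'
        · exact h'
      -- subcase: n > 0 and a (n-1) = 1
      by_cases hprev : 0 < n ∧ a (n - 1) = 1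
      · obtain ⟨hn0, hp1⟩ := hprev
        have := ih (n - 1) (by omega) a ha
        have h2 : h a (n - 1) = 1 := this.trans hp1
        have := hmaps ha (n - 1) h2
        rw [Nat.sub_add_cancel hn0] at this
        rw [hha1] at this
        exact absurd this (by decide)
      · -- a (n-1) = 0 or n = 0 : build b with b n = 1
        have hprev' : ∀ i, i + 1 = n → a i = 0 := by
          intro i hi
          rcases fin2_cases (a i) with h' | h'
          · exact h'
          · exact absurd ⟨by omega, by rw [show n - 1 = i by omega]; exact h'⟩ hprev
        set b : ℕ → Fin 2 := fun i => if i = n then 1 else if n ≤ i then 0 else a i with hbdef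
        have hbX : b ∈ FibonacciSpace := by
          intro i hbi
          simp only [hbdef] at hbi ⊢
          split at hbi
          · rename_i hi; subst hi
            rw [if_neg (by omega), if_pos (by omega)]
          · split at hbi
            · exact absurd hbi (by simp)
            · rename_i hne hlt
              push_neg at hlt
              rcases lt_or_ge (i+1) n with hc1 | hc2
              · rw [if_neg (by omega), if_neg (by omega)]; exact ha i hbi
              · have : i + 1 = n := by omega
                exact absurd (hprev' i this |>.symm.trans hbi) (by decide)
        have hbn : b n = 1 := by simp [hbdef]
        have hab : seqDist a b = Real.exp (-(n:ℝ)) :=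
          seqDist_eq_exp (by rw [h0, hbn]; decide)
            (fun i hi => by simp [hbdef, if_neg (by omega : ¬ i = n), if_neg (by omega : ¬ n ≤ i)])
        have hhb := exp_eq_seqDist ((hiso a ha b hbX).trans hab)
        exact hhb.1 (hha1.trans (hA b hbX hbn).symm)
    · exact (hA a ha h1).trans h1.symm

/-- The Fibonacci space is locally rigid: every point has an open ball around it such
that every isometry of that ball onto itself is the identity. -/
theorem fibonacciSpace_locallyRigid :
    ∀ x ∈ FibonacciSpace, ∃ ε > 0,
      ∀ h : (ℕ → Fin 2) → (ℕ → Fin 2),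
        Set.BijOn h {y ∈ FibonacciSpace | seqDist x y < ε}
          {y ∈ FibonacciSpace | seqDist x y < ε} →
        (∀ a ∈ {y ∈ FibonacciSpace | seqDist x y < ε},
          ∀ b ∈ {y ∈ FibonacciSpace | seqDist x y < ε},
            seqDist (h a) (h b) = seqDist a b) →
        ∀ a ∈ {y ∈ FibonacciSpace | seqDist x y < ε}, h a = a := by
  intro x _
  refine ⟨2, by norm_num, ?_⟩
  have hset : {y ∈ FibonacciSpace | seqDist x y < 2} = FibonacciSpace := by
    ext y; simp [seqDist_lt_two]
  rw [hset]
  intro h hbij hiso a ha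
  exact fib_rigid h hbij.mapsTo hiso a ha
end
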